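/- arXiv:2502.16628 — 10 statements merged into one kernel-verified Lean document; each statement's English description precedes it below -/
import Mathlib

section
/- Let n ≥ 3 and let d = ⌊n/2⌋ be the diameter of the cycle graph C_n. Then every edge of C_n is contained in exactly d(d+1)/2 geodesic paths of C_n. -/
open SimpleGraph Finset

/-- A walk in `G` is a *geodesic walk* if it is a nontrivial path whose length equals
the distance in `G` between its endpoints. -/
def SimpleGraph.IsGeodesicWalk {V : Type*} (G : SimpleGraph V) {u v : V}
    (p : G.Walk u v) : Prop :=
  p.IsPath ∧ p.length = G.dist u v ∧ 0 < p.length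

/-- The geodesic paths of `G`, where a path and its reverse are identified by
recording the (finite) set of edges of the path.  (A nontrivial path is determined,
up to reversal, by its edge set.) -/
def SimpleGraph.geodesicPathSets {V : Type*} [DecidableEq V] (G : SimpleGraph V) :
    Set (Finset (Sym2 V)) :=
  {S | ∃ (u v : V) (p : G.Walk u v), G.IsGeodesicWalk p ∧ p.edges.toFinset = S}

/-- The geodesic path number `t_gp(G)`: the number of geodesic paths of `G`. -/
noncomputable def SimpleGraph.tgp {V : Type*} [DecidableEq V] (G : SimpleGraph V) : ℕ :=
  G.geodesicPathSets.ncard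

/-- `f` is a geodesic Leech labeling of `G`: an edge labeling by positive integers such
that the weights of the geodesic paths of `G` are exactly `1, 2, …, t_gp(G)`,
each occurring exactly once. -/
def SimpleGraph.IsGeodesicLeechLabeling {V : Type*} [DecidableEq V] (G : SimpleGraph V)
    (f : Sym2 V → ℕ) : Prop :=
  (∀ e ∈ G.edgeSet, 1 ≤ f e) ∧
    Set.BijOn (fun S => ∑ e ∈ S, f e) G.geodesicPathSets (Set.Icc 1 G.tgp)

/-!
A geodesic path of `C_n` is a path, and a path in a cycle never turns back, so it walks
monotonically around the cycle: its edge set is an arc `{u, u+1}, …, {u+ℓ-1, u+ℓ}`. Such an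
arc is a shortest path exactly when `ℓ ≤ n - ℓ`, because the only other route between its
endpoints is the complementary arc of length `n - ℓ`. Hence the geodesic paths are the arcs
with `1 ≤ ℓ ≤ d`, distinct pairs `(u, ℓ)` giving distinct arcs. An edge `{w, w+1}` lies on
exactly the `ℓ` arcs of length `ℓ` starting at `w - k` with `k < ℓ`, and
`1 + 2 + ⋯ + d = d(d+1)/2`.
-/

open Fin.NatCast Fin.CommRing

lemma Fin.natCast_inj_of_lt {n a b : ℕ} [NeZero n] (ha : a < n) (hb : b < n) :
    (a : Fin n) = b ↔ a = b := by
  simp [Fin.ext_iff, Nat.mod_eq_of_lt ha, Nat.mod_eq_of_lt hb]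

lemma Nat.eq_zero_or_eq_of_dvd_of_lt_two_mul {n m : ℕ} (h : n ∣ m) (hm : m < 2 * n) :
    m = 0 ∨ m = n := by
  obtain ⟨c, rfl⟩ := h
  have : c < 2 := by nlinarith
  interval_cases c <;> simp

namespace SimpleGraph

lemma Walk.edges_toFinset_eq_image_getVert {V : Type*} [DecidableEq V] {G : SimpleGraph V}
    {u v : V} (p : G.Walk u v) :
    p.edges.toFinset = (range p.length).image fun i => s(p.getVert i, p.getVert (i + 1)) := by
  ext e
  induction e using Sym2.ind with
  | _ a b => simp [Walk.mk_mem_edges_iff_exists]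

lemma IsGeodesicWalk.reverse {V : Type*} {G : SimpleGraph V} {u v : V} {p : G.Walk u v}
    (hp : G.IsGeodesicWalk p) : G.IsGeodesicWalk p.reverse := by
  obtain ⟨hpath, hdist, hpos⟩ := hp
  refine ⟨hpath.reverse, ?_, by rwa [Walk.length_reverse]⟩
  rw [Walk.length_reverse, hdist, dist_comm]

variable {n : ℕ} [NeZero n]

lemma cycleGraph_adj_iff (hn : 2 ≤ n) {u v : Fin n} :
    (cycleGraph n).Adj u v ↔ v = u + 1 ∨ u = v + 1 := by
  obtain ⟨m, rfl⟩ : ∃ m, n = m + 2 := ⟨n - 2, by omega⟩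
  rw [cycleGraph_adj, sub_eq_iff_eq_add', sub_eq_iff_eq_add', or_comm]

lemma Walk.IsPath.cycleGraph_getVert_eq (hn : 2 ≤ n) {u v : Fin n}
    {p : (cycleGraph n).Walk u v} (hp : p.IsPath) :
    ∃ δ : Fin n, (δ = 1 ∨ δ = -1) ∧ ∀ k ≤ p.length, p.getVert k = u + k * δ := by
  induction p with
  | nil => exact ⟨1, .inl rfl, fun k hk => by obtain rfl : k = 0 := (by simpa using hk); simp⟩
  | @cons u w v h q ih =>
    rw [Walk.cons_isPath_iff] at hp
    obtain ⟨δ, hδ, hq⟩ := ih hp.1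
    obtain ⟨ε, hε, rfl⟩ : ∃ ε : Fin n, (ε = 1 ∨ ε = -1) ∧ w = u + ε := by
      rcases (cycleGraph_adj_iff hn).mp h with rfl | rfl
      · exact ⟨1, .inl rfl, rfl⟩
      · exact ⟨-1, .inr rfl, by ring⟩
    have hqε : ∀ k ≤ q.length, q.getVert k = u + ε + k * ε := by
      rcases Nat.eq_zero_or_pos q.length with h0 | hpos
      · intro k hk
        obtain rfl : k = 0 := by omega
        simp
      -- a path cannot turn back, as its second vertex would then be `u` again
      obtain rfl : δ = ε := by
        by_contra hne
        have hδε : δ = -ε := by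
          rcases hδ with rfl | rfl <;> rcases hε with rfl | rfl <;> simp_all
        have hturn : q.getVert 1 = u := by rw [hq 1 hpos, hδε]; ring
        have hmem := q.getVert_mem_support 1
        rw [hturn] at hmem
        exact hp.2 hmem
      exact hq
    refine ⟨ε, hε, ?_⟩
    rintro (_ | k) hk
    · simp
    · rw [Walk.getVert_cons_succ, hqε k (by simp at hk; omega)]
      push_cast
      ring

lemma Walk.IsPath.cycleGraph_getVert_eq_add (hn : 2 ≤ n) {u v : Fin n}
    {p : (cycleGraph n).Walk u v} (hp : p.IsPath) :
    (∀ k ≤ p.length, p.getVert k = u + k) ∨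
      ∀ k ≤ p.length, p.reverse.getVert k = v + k := by
  obtain ⟨δ, rfl | rfl, h⟩ := hp.cycleGraph_getVert_eq hn
  · exact .inl fun k hk => by simpa using h k hk
  · right
    intro k hk
    have hv := h _ le_rfl
    rw [Walk.getVert_length] at hv
    rw [Walk.getVert_reverse, h _ (Nat.sub_le _ _), Nat.cast_sub hk]
    linear_combination -hv

lemma cycleGraph_exists_walk_getVert_eq_add (hn : 2 ≤ n) (u : Fin n) (ℓ : ℕ) :
    ∃ p : (cycleGraph n).Walk u (u + ℓ),
      p.length = ℓ ∧ ∀ k ≤ ℓ, p.getVert k = u + k := by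
  induction ℓ generalizing u with
  | zero =>
    exact ⟨Walk.nil.copy rfl (by simp), by simp,
      fun k hk => by obtain rfl : k = 0 := (by omega); simp⟩
  | succ ℓ ih =>
    obtain ⟨q, hql, hq⟩ := ih (u + 1)
    have hadj : (cycleGraph n).Adj u (u + 1) := (cycleGraph_adj_iff hn).mpr (.inl rfl)
    refine ⟨(Walk.cons hadj q).copy rfl (by push_cast; ring), by simp [hql], ?_⟩
    rintro (_ | k) hk
    · simp
    · rw [Walk.getVert_copy, Walk.getVert_cons_succ, hq k (by omega)]
      push_cast
      ring

lemma cycleGraph_dist_self_add_natCast (hn : 2 ≤ n) (u : Fin n) {ℓ : ℕ} (hℓ : ℓ < n) :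
    (cycleGraph n).dist u (u + ℓ) = min ℓ (n - ℓ) := by
  obtain ⟨p, hpl, -⟩ := cycleGraph_exists_walk_getVert_eq_add hn u ℓ
  obtain ⟨q, hql, -⟩ := cycleGraph_exists_walk_getVert_eq_add hn (u + ℓ) (n - ℓ)
  have hback : u + ℓ + ((n - ℓ : ℕ) : Fin n) = u := by
    rw [Nat.cast_sub hℓ.le, Fin.natCast_self]
    ring
  refine le_antisymm (le_min ((dist_le p).trans_eq hpl) ?_) ?_
  · rw [dist_comm, ← hql, ← Walk.length_copy q rfl hback]
    exact dist_le _
  obtain ⟨r, hr, hrl⟩ := p.reachable.exists_path_of_dist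
  have hrn : r.length < n := by simpa using hr.length_lt
  rw [← hrl]
  rcases hr.cycleGraph_getVert_eq_add hn with h | h
  · have hend := h _ le_rfl
    rw [Walk.getVert_length, add_right_inj, Fin.natCast_inj_of_lt hℓ hrn] at hend
    omega
  · have hend := h _ le_rfl
    rw [Walk.getVert_reverse, Nat.sub_self, Walk.getVert_zero, add_assoc, left_eq_add,
      ← Nat.cast_add, Fin.natCast_eq_zero] at hend
    have := Nat.eq_zero_or_eq_of_dvd_of_lt_two_mul hend (by omega)
    omega

def cycleArc (u : Fin n) (ℓ : ℕ) : Finset (Sym2 (Fin n)) :=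
  (range ℓ).image fun k : ℕ => s(u + k, u + k + 1)

lemma Walk.edges_toFinset_eq_cycleArc {u v : Fin n} {p : (cycleGraph n).Walk u v}
    (h : ∀ k ≤ p.length, p.getVert k = u + k) : p.edges.toFinset = cycleArc u p.length := by
  rw [p.edges_toFinset_eq_image_getVert, cycleArc]
  refine image_congr fun k hk => ?_
  rw [coe_range, Set.mem_Iio] at hk
  simp only [h k hk.le, h (k + 1) hk, Nat.cast_succ, add_assoc]

lemma IsGeodesicWalk.cycleGraph_edges_toFinset (hn : 2 ≤ n) {u v : Fin n}
    {p : (cycleGraph n).Walk u v} (hp : (cycleGraph n).IsGeodesicWalk p)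
    (h : ∀ k ≤ p.length, p.getVert k = u + k) :
    1 ≤ p.length ∧ p.length ≤ n / 2 ∧ p.edges.toFinset = cycleArc u p.length := by
  obtain ⟨hpath, hdist, hpos⟩ := hp
  have hv : u + p.length = v := by rw [← h _ le_rfl, Walk.getVert_length]
  have hlt : p.length < n := by simpa using hpath.length_lt
  have hmin := cycleGraph_dist_self_add_natCast hn u hlt
  rw [hv] at hmin
  exact ⟨hpos, by omega, Walk.edges_toFinset_eq_cycleArc h⟩

lemma mem_geodesicPathSets_cycleGraph_iff (hn : 2 ≤ n) {S : Finset (Sym2 (Fin n))} :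
    S ∈ (cycleGraph n).geodesicPathSets ↔
      ∃ (u : Fin n) (ℓ : ℕ), 1 ≤ ℓ ∧ ℓ ≤ n / 2 ∧ cycleArc u ℓ = S := by
  constructor
  · rintro ⟨u, v, p, hp, rfl⟩
    rcases hp.1.cycleGraph_getVert_eq_add hn with h | h
    · obtain ⟨h1, h2, hS⟩ := hp.cycleGraph_edges_toFinset hn h
      exact ⟨u, p.length, h1, h2, hS.symm⟩
    · obtain ⟨h1, h2, hS⟩ :=
        hp.reverse.cycleGraph_edges_toFinset hn (by rwa [Walk.length_reverse])
      simp only [Walk.edges_reverse, List.toFinset_reverse, Walk.length_reverse] at hS h1 h2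
      exact ⟨v, p.length, h1, h2, hS.symm⟩
  · rintro ⟨u, ℓ, h1, h2, rfl⟩
    obtain ⟨p, hpl, hp⟩ := cycleGraph_exists_walk_getVert_eq_add hn u ℓ
    have hlt : ℓ < n := by omega
    have hpath : p.IsPath := by
      refine (Walk.IsPath.getVert_injOn_iff p).mp fun i hi j hj hij => ?_
      simp only [Set.mem_ofPred_eq, hpl] at hi hj
      rwa [hp i hi, hp j hj, add_right_inj, Fin.natCast_inj_of_lt (by omega) (by omega)] at hij
    have hS := p.edges_toFinset_eq_cycleArc (by rwa [hpl])
    rw [hpl] at hS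
    refine ⟨u, u + ℓ, p, ⟨hpath, ?_, by omega⟩, hS⟩
    rw [hpl, cycleGraph_dist_self_add_natCast hn u hlt]
    omega

lemma cycleGraph_mk_add_one_inj (hn : 3 ≤ n) {a b : Fin n} :
    s(a, a + 1) = s(b, b + 1) ↔ a = b := by
  refine ⟨fun h => ?_, by rintro rfl; rfl⟩
  rcases Sym2.eq_iff.mp h with ⟨rfl, -⟩ | ⟨h1, h2⟩
  · rfl
  have h2 : ((2 : ℕ) : Fin n) = 0 := by
    push_cast
    linear_combination h2 - h1
  have := Nat.le_of_dvd two_pos (Fin.natCast_eq_zero.mp h2)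
  omega

lemma mk_add_one_mem_cycleArc_iff (hn : 3 ≤ n) {u w : Fin n} {ℓ : ℕ} :
    s(w, w + 1) ∈ cycleArc u ℓ ↔ ∃ k < ℓ, u + k = w := by
  simp only [cycleArc, mem_image, mem_range, cycleGraph_mk_add_one_inj hn]

lemma card_cycleArc (hn : 3 ≤ n) (u : Fin n) {ℓ : ℕ} (hℓ : ℓ ≤ n) :
    #(cycleArc u ℓ) = ℓ := by
  rw [cycleArc, card_image_of_injOn, card_range]
  intro i hi j hj hij
  rw [coe_range, Set.mem_Iio] at hi hj
  rwa [cycleGraph_mk_add_one_inj hn, add_right_inj, Fin.natCast_inj_of_lt (by omega) (by omega)]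
    at hij

lemma cycleArc_inj (hn : 3 ≤ n) {u u' : Fin n} {ℓ ℓ' : ℕ} (h1 : 1 ≤ ℓ)
    (h2 : ℓ ≤ n / 2) (h2' : ℓ' ≤ n / 2) (heq : cycleArc u ℓ = cycleArc u' ℓ') :
    u = u' ∧ ℓ = ℓ' := by
  obtain rfl : ℓ = ℓ' := by
    rw [← card_cycleArc hn u (by omega : ℓ ≤ n), heq, card_cycleArc hn u' (by omega)]
  have hstart (a : Fin n) : s(a, a + 1) ∈ cycleArc a ℓ :=
    (mk_add_one_mem_cycleArc_iff hn).mpr ⟨0, h1, by simp⟩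
  have hu' : s(u', u' + 1) ∈ cycleArc u ℓ := heq ▸ hstart u'
  have hu : s(u, u + 1) ∈ cycleArc u' ℓ := heq ▸ hstart u
  obtain ⟨k, hk, rfl⟩ := (mk_add_one_mem_cycleArc_iff hn).mp hu'
  obtain ⟨k', hk', hkk'⟩ := (mk_add_one_mem_cycleArc_iff hn).mp hu
  -- going forward `k` and then `k'` steps returns to `u`, and `k + k' < n`
  have h0 : ((k + k' : ℕ) : Fin n) = 0 := by
    push_cast
    linear_combination hkk'
  obtain rfl : k = 0 := by
    rw [← Nat.cast_zero, Fin.natCast_inj_of_lt (by omega) (by omega)] at h0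
    omega
  simp

lemma cycleGraph_geodesicPathSets_sep_mk_mem_eq_image (hn : 3 ≤ n) (w : Fin n) :
    {S ∈ (cycleGraph n).geodesicPathSets | s(w, w + 1) ∈ S} =
      ↑(((range (n / 2 + 1)).sigma range).image fun q => cycleArc (w - (q.2 : Fin n)) q.1) := by
  ext S
  simp only [Set.mem_ofPred_eq, coe_image, Set.mem_image, mem_coe, Sigma.exists, mem_sigma,
    mem_range, mem_geodesicPathSets_cycleGraph_iff (by omega : 2 ≤ n)]
  constructor
  · rintro ⟨⟨u, ℓ, h1, h2, rfl⟩, hw⟩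
    obtain ⟨k, hk, rfl⟩ := (mk_add_one_mem_cycleArc_iff hn).mp hw
    exact ⟨ℓ, k, ⟨by omega, hk⟩, by simp⟩
  · rintro ⟨ℓ, k, ⟨h2, hk⟩, rfl⟩
    exact ⟨⟨w - k, ℓ, by omega, by omega, rfl⟩,
      (mk_add_one_mem_cycleArc_iff hn).mpr ⟨k, hk, sub_add_cancel w k⟩⟩

lemma injOn_cycleArc_sub (hn : 3 ≤ n) (w : Fin n) :
    Set.InjOn (fun q : (_ : ℕ) × ℕ => cycleArc (w - (q.2 : Fin n)) q.1)
      ((range (n / 2 + 1)).sigma range) := by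
  rintro ⟨ℓ, k⟩ hq ⟨ℓ', k'⟩ hq' heq
  simp only [mem_coe, mem_sigma, mem_range] at hq hq'
  dsimp only at heq
  obtain ⟨hu, rfl⟩ := cycleArc_inj hn (by omega) (by omega) (by omega) heq
  obtain rfl : k = k' := (Fin.natCast_inj_of_lt (by omega) (by omega)).mp (sub_right_inj.mp hu)
  rfl

lemma cycleGraph_exists_eq_mk_add_one (hn : 2 ≤ n) {e : Sym2 (Fin n)}
    (he : e ∈ (cycleGraph n).edgeSet) : ∃ w : Fin n, e = s(w, w + 1) := by
  induction e using Sym2.ind with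
  | _ a b =>
    rw [mem_edgeSet] at he
    rcases (cycleGraph_adj_iff hn).mp he with h | h
    · exact ⟨a, by rw [h]⟩
    · exact ⟨b, by rw [h, Sym2.eq_swap]⟩

end SimpleGraph

/-- For `n ≥ 3` and `d = n / 2` (the diameter of the cycle on `n` vertices), every edge
of the cycle lies in exactly `d(d+1)/2` geodesic paths. -/
theorem statement_3 (n : ℕ) (hn : 3 ≤ n) (e : Sym2 (Fin n))
    (he : e ∈ (SimpleGraph.cycleGraph n).edgeSet) :
    {S ∈ (SimpleGraph.cycleGraph n).geodesicPathSets | e ∈ S}.ncard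
      = (n / 2) * (n / 2 + 1) / 2 := by
  have : NeZero n := ⟨by omega⟩
  obtain ⟨w, rfl⟩ := cycleGraph_exists_eq_mk_add_one (by omega) he
  rw [cycleGraph_geodesicPathSets_sep_mk_mem_eq_image hn, Set.ncard_coe_finset,
    card_image_of_injOn (injOn_cycleArc_sub hn w), card_sigma]
  simp only [card_range, sum_range_id, Nat.add_sub_cancel, mul_comm]
end

section
/- Let k be a positive integer. If k(k+1)/2 divides (2k² + k)(2k² + k + 1)/2, then k = 1. -/
open SimpleGraph Finset

/-- If `k` is a positive integer and `k(k+1)/2` divides `(2k^2+k)(2k^2+k+1)/2`,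
then `k = 1`. -/
theorem statement_4 (k : ℕ) (hk : 0 < k)
    (h : k * (k + 1) / 2 ∣ (2 * k ^ 2 + k) * (2 * k ^ 2 + k + 1) / 2) :
    k = 1 := by
  obtain ⟨c, hc⟩ := h
  have he1 : 2 ∣ k * (k + 1) := (Nat.even_mul_succ_self k).two_dvd
  have he2 : 2 ∣ (2 * k ^ 2 + k) * (2 * k ^ 2 + k + 1) :=
    (Nat.even_mul_succ_self (2 * k ^ 2 + k)).two_dvd
  have key : (2 * k ^ 2 + k) * (2 * k ^ 2 + k + 1) = k * (k + 1) * c := by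
    obtain ⟨a, ha⟩ := he1
    obtain ⟨b, hb⟩ := he2
    rw [ha, hb] at hc ⊢
    rw [Nat.mul_div_cancel_left _ (by norm_num), Nat.mul_div_cancel_left _ (by norm_num)] at hc
    rw [hc]; ring
  have key2 : (k + 1) * c = (2 * k + 1) * (2 * k ^ 2 + k + 1) := by
    have : k * ((k + 1) * c) = k * ((2 * k + 1) * (2 * k ^ 2 + k + 1)) := by
      rw [← mul_assoc, ← key]; ring
    exact Nat.eq_of_mul_eq_mul_left hk this
  have keq : (k + 1) * (4 * k ^ 2 + 3) = (k + 1) * c + 2 := by rw [key2]; ring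
  have hdvd2 : (k + 1) ∣ 2 := by
    have := Nat.dvd_sub (Dvd.intro _ rfl : (k+1) ∣ (k+1) * (4 * k ^ 2 + 3))
      (Dvd.intro _ rfl : (k+1) ∣ (k+1) * c)
    rwa [keq, Nat.add_sub_cancel_left] at this
  have := Nat.le_of_dvd (by norm_num) hdvd2
  omega
end

section
/- Let k be a positive integer. If k(k+1)/2 divides k²(2k² + 1), then k = 1, k = 2, or k = 5. -/
open SimpleGraph Finset

/-- If `k` is a positive integer and `k(k+1)/2` divides `k^2(2k^2+1)`, then
`k = 1`, `k = 2`, or `k = 5`. -/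
theorem statement_5 (k : ℕ) (hk : 0 < k)
    (h : k * (k + 1) / 2 ∣ k ^ 2 * (2 * k ^ 2 + 1)) :
    k = 1 ∨ k = 2 ∨ k = 5 := by
  have hev : 2 ∣ k * (k + 1) := (Nat.even_mul_succ_self k).two_dvd
  have h2 : k * (k + 1) ∣ 2 * (k ^ 2 * (2 * k ^ 2 + 1)) := by
    have := mul_dvd_mul_left 2 h
    rwa [Nat.mul_div_cancel' hev] at this
  have h3 : (k + 1) ∣ 2 * k * (2 * k ^ 2 + 1) := by
    have := (mul_dvd_mul_iff_left (show (k:ℕ) ≠ 0 from hk.ne')).mp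
      (show k * (k + 1) ∣ k * (2 * k * (2 * k ^ 2 + 1)) by
        have : k * (2 * k * (2 * k ^ 2 + 1)) = 2 * (k ^ 2 * (2 * k ^ 2 + 1)) := by ring
        rw [this]; exact h2)
    exact this
  have hA : (k + 1) ∣ 2 * k * (2 * k ^ 2 + 1) + 6 :=
    ⟨4 * k ^ 2 - 4 * k + 6, by
      have h4 : 4 * k ≤ 4 * k ^ 2 := by nlinarith
      zify [h4]; ring⟩
  have h6 : (k + 1) ∣ 6 := by
    have := Nat.dvd_sub hA h3
    simpa using this
  have hle : k ≤ 5 := by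
    have := Nat.le_of_dvd (by norm_num) h6
    omega
  interval_cases k <;> omega
end

section
/- If f is a geodesic Leech labeling of the cycle graph C_10 on 10 vertices, then every geodesic path of length 5 in C_10 has weight at least 35 under f. -/
open SimpleGraph Finset

/-!
The geodesic paths of `C_N` are the arcs of `k` consecutive edges with `1 ≤ k ≤ N / 2`, one for
each start vertex and length, so `t_gp(C_10) = 50`. Summing all arc weights, every edge is counted
`1 + 2 + ⋯ + 5 = 15` times, hence `15 L = 1 + 2 + ⋯ + 50 = 1275` for the total label sum `L`,
i.e. `L = 85`. An arc of length 5 and the opposite arc of length 5 partition the edges, and the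
latter weighs at most `t_gp = 50`, so the former weighs at least `85 - 50 = 35`.
-/

open scoped Fin.NatCast Fin.CommRing

namespace SimpleGraph.IsGeodesicLeechLabeling

variable {V : Type*} [DecidableEq V] {G : SimpleGraph V} {f : Sym2 V → ℕ}

lemma weight_le_tgp (hf : G.IsGeodesicLeechLabeling f) {S : Finset (Sym2 V)}
    (hS : S ∈ G.geodesicPathSets) : ∑ e ∈ S, f e ≤ G.tgp :=
  (hf.2.mapsTo hS).2

lemma sum_weight_eq (hf : G.IsGeodesicLeechLabeling f) {T : Finset (Finset (Sym2 V))}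
    (hT : G.geodesicPathSets = T) : ∑ S ∈ T, ∑ e ∈ S, f e = ∑ m ∈ Icc 1 T.card, m := by
  have hbij := hf.2
  rw [tgp, hT, Set.ncard_coe_finset] at hbij
  exact Finset.sum_nbij _ (fun S hS => by simpa using hbij.mapsTo hS) hbij.injOn
    (fun m hm => hbij.surjOn (by simpa using hm)) (fun _ _ => rfl)

end SimpleGraph.IsGeodesicLeechLabeling

lemma Fin.natCast_injOn {N : ℕ} [NeZero N] :
    Set.InjOn (Nat.cast : ℕ → Fin N) (Set.Iio N) := by
  intro s hs t ht h
  simpa [Fin.ext_iff, Fin.val_natCast, Nat.mod_eq_of_lt hs, Nat.mod_eq_of_lt ht] using h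

namespace SimpleGraph.cycleGraph

variable {N : ℕ} [NeZero N]

def edge (i : Fin N) : Sym2 (Fin N) := s(i, i + 1)

lemma edge_injective (hN : 2 < N) : Function.Injective (edge (N := N)) := by
  intro i j h
  rcases Sym2.eq_iff.mp h with ⟨hij, -⟩ | ⟨hij, hji⟩
  · exact hij
  · have h2 : ((2 : ℕ) : Fin N) = 0 := by
      push_cast
      linear_combination hji - hij
    exact absurd (Nat.le_of_dvd two_pos (Fin.natCast_eq_zero.mp h2)) (by omega)

def arc (i : Fin N) (k : ℕ) : Finset (Sym2 (Fin N)) :=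
  (range k).image fun t : ℕ => edge (i + t)

lemma mem_arc {e : Sym2 (Fin N)} {i : Fin N} {k : ℕ} :
    e ∈ arc i k ↔ ∃ t < k, edge (i + (t : Fin N)) = e := by
  simp [arc]

@[simp] lemma arc_zero (i : Fin N) : arc i 0 = ∅ := by simp [arc]

lemma arc_one (i : Fin N) : arc i 1 = {edge i} := by simp [arc]

lemma arc_succ (i : Fin N) (k : ℕ) : arc i (k + 1) = insert (edge i) (arc (i + 1) k) := by
  ext e
  simp only [mem_insert, mem_arc]
  constructor
  · rintro ⟨_ | t, ht, rfl⟩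
    · simp
    · exact Or.inr ⟨t, by omega, by push_cast; ring_nf⟩
  · rintro (rfl | ⟨t, ht, rfl⟩)
    · exact ⟨0, by omega, by simp⟩
    · exact ⟨t + 1, by omega, by push_cast; ring_nf⟩

lemma arc_succ' (i : Fin N) (k : ℕ) :
    arc i (k + 1) = insert (edge (i + (k : Fin N))) (arc i k) := by
  rw [arc, range_add_one, image_insert, arc]

lemma sum_arc (hN : 2 < N) (f : Sym2 (Fin N) → ℕ) (i : Fin N) {k : ℕ} (hk : k ≤ N) :
    ∑ e ∈ arc i k, f e = ∑ t ∈ range k, f (edge (i + (t : Fin N))) := by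
  refine sum_image fun (s : ℕ) hs (t : ℕ) ht h =>
    Fin.natCast_injOn ?_ ?_ (add_left_cancel (edge_injective hN h))
  · simp at hs ⊢; omega
  · simp at ht ⊢; omega

lemma card_arc (hN : 2 < N) (i : Fin N) {k : ℕ} (hk : k ≤ N) : (arc i k).card = k := by
  simpa using sum_arc hN (fun _ => 1) i hk

lemma eq_add_one_or_eq_sub_one_of_adj {u w : Fin N} (h : (cycleGraph N).Adj u w) :
    w = u + 1 ∨ w = u - 1 := by
  rcases N with _ | _ | n
  · exact u.elim0
  · exact absurd h cycleGraph_one_adj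
  · rcases cycleGraph_adj.mp h with h | h
    · exact Or.inr (by linear_combination -h)
    · exact Or.inl (by linear_combination h)

lemma adj_add_one (hN : 2 ≤ N) (i : Fin N) : (cycleGraph N).Adj i (i + 1) := by
  obtain ⟨n, rfl⟩ : ∃ n, N = n + 2 := ⟨N - 2, by omega⟩
  exact cycleGraph_adj.mpr (Or.inr (by ring))

lemma mem_support_of_edges_eq_arc {u v i : Fin N} {p : (cycleGraph N).Walk u v} {k t : ℕ}
    (hp : p.edges.toFinset = arc i k) (ht : t < k) :
    i + t ∈ p.support ∧ i + t + 1 ∈ p.support := by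
  have : edge (i + (t : Fin N)) ∈ p.edges := by
    rw [← List.mem_toFinset, hp, mem_arc]
    exact ⟨t, ht, rfl⟩
  exact ⟨p.fst_mem_support_of_mem_edges this, p.snd_mem_support_of_mem_edges this⟩

lemma exists_isPath_arc (hN : 2 ≤ N) (i : Fin N) {k : ℕ} (hk : k < N) :
    ∃ p : (cycleGraph N).Walk i (i + k), p.IsPath ∧ p.length = k ∧
      p.edges.toFinset = arc i k ∧ ∀ x ∈ p.support, ∃ t ≤ k, x = i + t := by
  induction k generalizing i with
  | zero => exact ⟨Walk.nil.copy rfl (by simp), by simp, by simp, by simp, by simp⟩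
  | succ k ih =>
    obtain ⟨q, hq, hlen, hedges, hsupp⟩ := ih (i + 1) (by omega)
    have hi : i ∉ q.support := by
      intro hmem
      obtain ⟨t, ht, hit⟩ := hsupp i hmem
      have : ((t + 1 : ℕ) : Fin N) = 0 := by push_cast; linear_combination -hit
      exact absurd (Nat.le_of_dvd (by omega) (Fin.natCast_eq_zero.mp this)) (by omega)
    refine ⟨(q.cons (adj_add_one hN i)).copy rfl (by push_cast; ring), ?_, ?_, ?_, ?_⟩
    · simpa [Walk.isPath_copy] using ⟨hq, hi⟩
    · simp [hlen]
    · simp [hedges, arc_succ, edge]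
    · intro x hx
      simp only [Walk.support_copy, Walk.support_cons, List.mem_cons] at hx
      rcases hx with rfl | hx
      · exact ⟨0, by omega, by simp⟩
      · obtain ⟨t, ht, rfl⟩ := hsupp x hx
        exact ⟨t + 1, by omega, by push_cast; ring⟩

lemma edges_eq_arc_of_isPath {u v : Fin N} {p : (cycleGraph N).Walk u v} (hp : p.IsPath) :
    (v = u + p.length ∧ p.edges.toFinset = arc u p.length) ∨
      (u = v + p.length ∧ p.edges.toFinset = arc v p.length) := by
  induction p with
  | nil => simp
  | @cons u w v h q ih =>
    obtain ⟨hq, hu⟩ := Walk.cons_isPath_iff h q |>.mp hp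
    simp only [Walk.length_cons, Walk.edges_cons, List.toFinset_cons, Nat.cast_add, Nat.cast_one]
    have hq_arc := ih hq
    generalize q.length = n at hq_arc ⊢
    rcases hq_arc with ⟨hv, hE⟩ | ⟨hw, hE⟩ <;> rw [hE] <;>
      rcases eq_add_one_or_eq_sub_one_of_adj h with rfl | rfl
    -- in the two mixed cases `q` must be trivial: turning back would revisit `u`
    · exact Or.inl ⟨by linear_combination hv, by rw [arc_succ]; rfl⟩
    · rcases n with _ | n
      · simp only [Nat.cast_zero, add_zero] at hv
        subst hv
        exact Or.inr ⟨by simp, by simp [arc_one, edge, Sym2.eq_swap]⟩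
      · exact absurd (by simpa using (mem_support_of_edges_eq_arc hE n.zero_lt_succ).2) hu
    · rcases n with _ | n
      · simp only [Nat.cast_zero, add_zero] at hw
        subst hw
        exact Or.inl ⟨by simp, by simp [arc_one, edge]⟩
      · refine absurd ?_ hu
        convert (mem_support_of_edges_eq_arc hE n.lt_succ_self).1 using 1
        push_cast at hw
        linear_combination hw
    · refine Or.inr ⟨by linear_combination hw, ?_⟩
      rw [arc_succ', ← hw]
      simp [edge, Sym2.eq_swap]

lemma dist_le_of_eq_add (hN : 2 ≤ N) {a b : Fin N} {k : ℕ} (hk : k < N) (h : b = a + k) :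
    (cycleGraph N).dist a b ≤ k := by
  subst h
  obtain ⟨p, -, hlen, -⟩ := exists_isPath_arc hN a hk
  exact (dist_le p).trans_eq hlen

lemma dist_add_natCast (hN : 2 ≤ N) (i : Fin N) {k : ℕ} (hk : 2 * k ≤ N) :
    (cycleGraph N).dist i (i + k) = k := by
  refine le_antisymm (dist_le_of_eq_add hN (by omega) rfl) ?_
  obtain ⟨q, hq, hqlen⟩ := (cycleGraph_preconnected i (i + k)).exists_path_of_dist
  have hlt : q.length < N := by simpa using hq.length_lt
  rw [← hqlen]
  rcases edges_eq_arc_of_isPath hq with ⟨h, -⟩ | ⟨h, -⟩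
  · exact (Fin.natCast_injOn (show k < N by omega) hlt (add_left_cancel h)).le
  · -- going the other way round, `k + q.length` is a multiple of `N`
    have hdvd : N ∣ k + q.length :=
      Fin.natCast_eq_zero.mp (by push_cast; linear_combination -h)
    rcases k.eq_zero_or_pos with rfl | hk0
    · exact Nat.zero_le _
    · have := Nat.le_of_dvd (by omega) hdvd
      omega

lemma two_mul_length_le_of_isGeodesicWalk (hN : 2 ≤ N) {u v : Fin N}
    {p : (cycleGraph N).Walk u v} (hp : (cycleGraph N).IsGeodesicWalk p) :
    2 * p.length ≤ N := by
  obtain ⟨hpath, hdist, hpos⟩ := hp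
  have hlt : p.length < N := by simpa using hpath.length_lt
  have hback : ((N - p.length : ℕ) : Fin N) = -p.length := by simp [Nat.cast_sub hlt.le]
  have : (cycleGraph N).dist u v ≤ N - p.length := by
    rcases edges_eq_arc_of_isPath hpath with ⟨h, -⟩ | ⟨h, -⟩
    · rw [dist_comm]
      exact dist_le_of_eq_add hN (by omega) (by rw [hback]; linear_combination -h)
    · exact dist_le_of_eq_add hN (by omega) (by rw [hback]; linear_combination -h)
  omega

def geodesicArcs (N : ℕ) [NeZero N] : Finset (Finset (Sym2 (Fin N))) :=
  (univ ×ˢ Icc 1 (N / 2)).image fun ik => arc ik.1 ik.2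

lemma arc_mem_geodesicArcs (i : Fin N) {k : ℕ} (hk1 : 1 ≤ k) (hk : 2 * k ≤ N) :
    arc i k ∈ geodesicArcs N :=
  mem_image_of_mem (fun ik : Fin N × ℕ => arc ik.1 ik.2) (a := (i, k)) (by simp; omega)

theorem geodesicPathSets_eq_geodesicArcs (hN : 2 ≤ N) :
    (cycleGraph N).geodesicPathSets = geodesicArcs N := by
  ext S
  simp only [geodesicPathSets, geodesicArcs, Set.mem_ofPred_eq, coe_image, coe_product, coe_univ,
    coe_Icc, Set.mem_image, Set.mem_prod, Set.mem_univ, Set.mem_Icc, true_and, Prod.exists]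
  constructor
  · rintro ⟨u, v, p, hp, rfl⟩
    have hlen := two_mul_length_le_of_isGeodesicWalk hN hp
    rcases edges_eq_arc_of_isPath hp.1 with ⟨-, hE⟩ | ⟨-, hE⟩
    · exact ⟨u, p.length, ⟨hp.2.2, by omega⟩, hE.symm⟩
    · exact ⟨v, p.length, ⟨hp.2.2, by omega⟩, hE.symm⟩
  · rintro ⟨i, k, ⟨hk1, hk⟩, rfl⟩
    obtain ⟨p, hpath, hlen, hE, -⟩ := exists_isPath_arc hN i (k := k) (by omega)
    refine ⟨i, i + k, p, ⟨hpath, ?_, by omega⟩, hE⟩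
    rw [hlen, dist_add_natCast hN i (by omega)]

lemma arc_injOn (hN : 2 < N) :
    Set.InjOn (fun ik : Fin N × ℕ => arc ik.1 ik.2)
      ↑(univ ×ˢ Icc 1 (N / 2) : Finset (Fin N × ℕ)) := by
  rintro ⟨i, k⟩ hik ⟨j, l⟩ hjl (h : arc i k = arc j l)
  simp only [coe_product, coe_univ, coe_Icc, Set.mem_prod, Set.mem_univ, Set.mem_Icc,
    true_and] at hik hjl
  obtain rfl : k = l := by
    simpa [card_arc hN, show k ≤ N by omega, show l ≤ N by omega] using congr_arg card h
  have hi : edge i ∈ arc j k := h ▸ mem_arc.mpr ⟨0, hik.1, by simp⟩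
  have hj : edge j ∈ arc i k := h ▸ mem_arc.mpr ⟨0, hik.1, by simp⟩
  obtain ⟨t, ht, hji⟩ := mem_arc.mp hi
  obtain ⟨s, hs, hij⟩ := mem_arc.mp hj
  rw [edge_injective hN |>.eq_iff] at hij hji
  -- the two start points are `t` and `s` steps apart in each direction, and `s + t < N`
  have hdvd : N ∣ s + t := Fin.natCast_eq_zero.mp (by push_cast; linear_combination hij + hji)
  obtain rfl : t = 0 := by
    have := Nat.eq_zero_of_dvd_of_lt hdvd (by omega)
    omega
  simpa using hji.symm

lemma card_geodesicArcs (hN : 2 < N) : (geodesicArcs N).card = N * (N / 2) := by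
  rw [geodesicArcs, card_image_of_injOn (arc_injOn hN)]
  simp

theorem tgp_eq (hN : 2 < N) : (cycleGraph N).tgp = N * (N / 2) := by
  rw [tgp, geodesicPathSets_eq_geodesicArcs hN.le, Set.ncard_coe_finset, card_geodesicArcs hN]

lemma sum_arc_add (hN : 2 < N) (f : Sym2 (Fin N) → ℕ) (i : Fin N) {k l : ℕ}
    (hkl : k + l ≤ N) :
    ∑ e ∈ arc i (k + l), f e =
      ∑ e ∈ arc i k, f e + ∑ e ∈ arc (i + (k : Fin N)) l, f e := by
  simp only [sum_arc hN f _ hkl, sum_arc hN f _ (show k ≤ N by omega),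
    sum_arc hN f _ (show l ≤ N by omega), sum_range_add, Nat.cast_add, add_assoc]

lemma sum_arc_self (hN : 2 < N) (f : Sym2 (Fin N) → ℕ) (i : Fin N) :
    ∑ e ∈ arc i N, f e = ∑ j, f (edge j) := by
  rw [sum_arc hN f i le_rfl, ← Fin.sum_univ_eq_sum_range (fun t => f (edge (i + t)))]
  simp only [Fin.cast_val_eq_self]
  exact Fintype.sum_equiv (Equiv.addLeft i) _ _ fun _ => rfl

lemma sum_geodesicArcs (hN : 2 < N) (f : Sym2 (Fin N) → ℕ) :
    ∑ S ∈ geodesicArcs N, ∑ e ∈ S, f e =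
      (∑ k ∈ Icc 1 (N / 2), k) * ∑ j, f (edge j) := by
  rw [geodesicArcs, sum_image (arc_injOn hN), sum_product, sum_comm, sum_mul]
  refine sum_congr rfl fun k hk => ?_
  have hkN : k ≤ N := by simp at hk; omega
  -- every edge lies on exactly `k` arcs of length `k`
  simp only [sum_arc hN f _ hkN]
  rw [sum_comm]
  trans ∑ _t ∈ range k, ∑ j, f (edge j)
  · exact sum_congr rfl fun t _ =>
      Fintype.sum_equiv (Equiv.addRight (t : Fin N)) _ _ fun _ => rfl
  · simp

end SimpleGraph.cycleGraph

/-- If `f` is a geodesic Leech labeling of the cycle on `10` vertices, then every geodesic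
path of length `5` has weight at least `35` under `f`. -/
theorem statement_8 (f : Sym2 (Fin 10) → ℕ)
    (hf : (SimpleGraph.cycleGraph 10).IsGeodesicLeechLabeling f)
    {u v : Fin 10} (p : (SimpleGraph.cycleGraph 10).Walk u v)
    (hp : (SimpleGraph.cycleGraph 10).IsGeodesicWalk p) (hlen : p.length = 5) :
    35 ≤ ∑ e ∈ p.edges.toFinset, f e := by
  have hN : 2 < 10 := by norm_num
  obtain ⟨a, ha⟩ : ∃ a, p.edges.toFinset = cycleGraph.arc a 5 := by
    rcases cycleGraph.edges_eq_arc_of_isPath hp.1 with ⟨-, h⟩ | ⟨-, h⟩ <;> rw [hlen] at h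
    exacts [⟨u, h⟩, ⟨v, h⟩]
  have htotal : 15 * ∑ j, f (cycleGraph.edge j) = 1275 := by
    have := hf.sum_weight_eq (cycleGraph.geodesicPathSets_eq_geodesicArcs hN.le)
    rwa [cycleGraph.sum_geodesicArcs hN f, cycleGraph.card_geodesicArcs hN,
      show ∑ k ∈ Icc 1 (10 / 2), k = 15 from rfl,
      show ∑ m ∈ Icc 1 (10 * (10 / 2)), m = 1275 from rfl] at this
  have hopposite : ∑ e ∈ cycleGraph.arc (a + 5) 5, f e ≤ 50 := by
    refine (hf.weight_le_tgp ?_).trans_eq (cycleGraph.tgp_eq hN)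
    rw [cycleGraph.geodesicPathSets_eq_geodesicArcs hN.le]
    exact cycleGraph.arc_mem_geodesicArcs _ (by norm_num) (by norm_num)
  have hsplit := cycleGraph.sum_arc_add hN f a (k := 5) (l := 5) le_rfl
  rw [cycleGraph.sum_arc_self hN f, Nat.cast_ofNat] at hsplit
  rw [ha]
  omega
end

section
/- For every positive integer n, the geodesic path number of the complete bipartite graph K_{n,n} is n³; moreover K_{n,n} has n² geodesic paths of length 1 (its edges) and n³ − n² geodesic paths of length 2. -/
open SimpleGraph Finset

private abbrev KB (n : ℕ) := completeBipartiteGraph (Fin n) (Fin n)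

private def F1 (n : ℕ) : Finset (Finset (Sym2 (Fin n ⊕ Fin n))) :=
  (univ : Finset (Fin n × Fin n)).image fun p => {s(Sum.inl p.1, Sum.inr p.2)}

private def F2L (n : ℕ) : Finset (Finset (Sym2 (Fin n ⊕ Fin n))) :=
  ((univ : Finset (Fin n × Fin n × Fin n)).filter fun p => p.2.1 < p.2.2).image
    fun p => {s(Sum.inl p.2.1, Sum.inr p.1), s(Sum.inl p.2.2, Sum.inr p.1)}

private def F2R (n : ℕ) : Finset (Finset (Sym2 (Fin n ⊕ Fin n))) :=
  ((univ : Finset (Fin n × Fin n × Fin n)).filter fun p => p.2.1 < p.2.2).image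
    fun p => {s(Sum.inl p.1, Sum.inr p.2.1), s(Sum.inl p.1, Sum.inr p.2.2)}

private lemma fpair_eq {α : Type*} [DecidableEq α] {a b c d : α} :
    ({a, b} : Finset α) = {c, d} ↔ a = c ∧ b = d ∨ a = d ∧ b = c := by
  rw [← Finset.coe_inj]
  simpa using Set.pair_eq_pair_iff

example : True := trivial

variable {n : ℕ}

private lemma adj_iff' {u v : Fin n ⊕ Fin n} :
    (KB n).Adj u v ↔ (∃ i j, u = Sum.inl i ∧ v = Sum.inr j) ∨
      (∃ i j, u = Sum.inr i ∧ v = Sum.inl j) := by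
  cases u <;> cases v <;> simp

private lemma dist_lr (i j : Fin n) : (KB n).dist (Sum.inl i) (Sum.inr j) = 1 :=
  SimpleGraph.dist_eq_one_iff_adj.mpr (by simp)

private lemma dist_ll (hn : 0 < n) {i j : Fin n} (h : i ≠ j) :
    (KB n).dist (Sum.inl i) (Sum.inl j) = 2 := by
  have hadj1 : (KB n).Adj (Sum.inl i) (Sum.inr ⟨0, hn⟩) := by simp
  have hadj2 : (KB n).Adj (Sum.inr ⟨0, hn⟩) (Sum.inl j) := by simp
  have w : (KB n).Walk (Sum.inl i) (Sum.inl j) :=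
    SimpleGraph.Walk.cons hadj1 (SimpleGraph.Walk.cons hadj2 SimpleGraph.Walk.nil)
  have hle : (KB n).dist (Sum.inl i) (Sum.inl j) ≤ 2 := by
    simpa using SimpleGraph.dist_le (SimpleGraph.Walk.cons hadj1 (SimpleGraph.Walk.cons hadj2 SimpleGraph.Walk.nil))
  have hne0 : (KB n).dist (Sum.inl i) (Sum.inl j) ≠ 0 := by
    intro h0
    rcases SimpleGraph.dist_eq_zero_iff_eq_or_not_reachable.mp h0 with h1 | h1
    · exact h (by simpa using h1)
    · exact h1 ⟨w⟩
  have hne1 : (KB n).dist (Sum.inl i) (Sum.inl j) ≠ 1 := by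
    intro h1
    have := SimpleGraph.dist_eq_one_iff_adj.mp h1
    simp at this
  omega

private lemma dist_rr (hn : 0 < n) {i j : Fin n} (h : i ≠ j) :
    (KB n).dist (Sum.inr i) (Sum.inr j) = 2 := by
  have hadj1 : (KB n).Adj (Sum.inr i) (Sum.inl ⟨0, hn⟩) := by simp
  have hadj2 : (KB n).Adj (Sum.inl ⟨0, hn⟩) (Sum.inr j) := by simp
  have w : (KB n).Walk (Sum.inr i) (Sum.inr j) :=
    SimpleGraph.Walk.cons hadj1 (SimpleGraph.Walk.cons hadj2 SimpleGraph.Walk.nil)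
  have hle : (KB n).dist (Sum.inr i) (Sum.inr j) ≤ 2 := by
    simpa using SimpleGraph.dist_le (SimpleGraph.Walk.cons hadj1 (SimpleGraph.Walk.cons hadj2 SimpleGraph.Walk.nil))
  have hne0 : (KB n).dist (Sum.inr i) (Sum.inr j) ≠ 0 := by
    intro h0
    rcases SimpleGraph.dist_eq_zero_iff_eq_or_not_reachable.mp h0 with h1 | h1
    · exact h (by simpa using h1)
    · exact h1 ⟨w⟩
  have hne1 : (KB n).dist (Sum.inr i) (Sum.inr j) ≠ 1 := by
    intro h1
    have := SimpleGraph.dist_eq_one_iff_adj.mp h1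
    simp at this
  omega

private lemma dist_le_two (hn : 0 < n) (u v : Fin n ⊕ Fin n) : (KB n).dist u v ≤ 2 := by
  cases u with
  | inl i =>
    cases v with
    | inl j =>
      rcases eq_or_ne i j with rfl | h
      · rw [SimpleGraph.dist_self]; omega
      · rw [dist_ll hn h]
    | inr j => rw [dist_lr]; omega
  | inr i =>
    cases v with
    | inl j => rw [SimpleGraph.dist_comm, dist_lr]; omega
    | inr j =>
      rcases eq_or_ne i j with rfl | h
      · rw [SimpleGraph.dist_self]; omega
      · rw [dist_rr hn h]

private lemma gps_eq (hn : 0 < n) :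
    (KB n).geodesicPathSets = ↑(F1 n ∪ F2L n ∪ F2R n) := by
  ext S
  simp only [SimpleGraph.geodesicPathSets, Set.mem_setOf_eq, Finset.coe_union, Set.mem_union,
    Finset.mem_coe]
  constructor
  · rintro ⟨u, v, p, ⟨hp, hlen, hpos⟩, rfl⟩
    cases p with
    | nil => simp at hpos
    | @cons _ b _ h q =>
      cases q with
      | nil =>
        left; left
        rcases adj_iff'.mp h with ⟨i, j, rfl, rfl⟩ | ⟨i, j, rfl, rfl⟩
        · exact Finset.mem_image.mpr ⟨(i, j), Finset.mem_univ _, by simp⟩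
        · exact Finset.mem_image.mpr ⟨(j, i), Finset.mem_univ _, by simp [Sym2.eq_swap]⟩
      | @cons _ c _ h' q' =>
        cases q' with
        | nil =>
          have hne : u ≠ v := by
            have h2 := hp.support_nodup
            simp only [SimpleGraph.Walk.support_cons, SimpleGraph.Walk.support_nil,
              List.nodup_cons, List.mem_cons, List.mem_singleton, List.not_mem_nil] at h2
            tauto
          have hd2 : (KB n).dist u v = 2 := by simpa using hlen.symm
          have hnadj : ¬ (KB n).Adj u v := by
            intro hadj
            rw [SimpleGraph.dist_eq_one_iff_adj.mpr hadj] at hd2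
            omega
          cases u with
          | inl i =>
            cases v with
            | inr j => exact absurd (by simp : (KB n).Adj (Sum.inl i) (Sum.inr j)) hnadj
            | inl j =>
              cases b with
              | inl k => simp at h
              | inr k =>
                left; right
                have hij : i ≠ j := by simpa using hne
                rcases hij.lt_or_gt with hlt | hlt
                · exact Finset.mem_image.mpr ⟨(k, i, j), by simp [hlt], by
                    simp [Sym2.eq_swap]⟩
                · exact Finset.mem_image.mpr ⟨(k, j, i), by simp [hlt], by
                    simp [Sym2.eq_swap, Finset.pair_comm]⟩
          | inr i =>
            cases v with
            | inl j => exact absurd (by simp : (KB n).Adj (Sum.inr i) (Sum.inl j)) hnadj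
            | inr j =>
              cases b with
              | inr k => simp at h
              | inl k =>
                right
                have hij : i ≠ j := by simpa using hne
                rcases hij.lt_or_gt with hlt | hlt
                · exact Finset.mem_image.mpr ⟨(k, i, j), by simp [hlt], by
                    simp [Sym2.eq_swap]⟩
                · exact Finset.mem_image.mpr ⟨(k, j, i), by simp [hlt], by
                    simp [Sym2.eq_swap, Finset.pair_comm]⟩
        | cons h'' q'' =>
          have hle := dist_le_two hn u v
          rw [← hlen] at hle
          simp only [SimpleGraph.Walk.length_cons] at hle
          omega
  · rintro ((h | h) | h)
    · obtain ⟨⟨i, j⟩, -, rfl⟩ := Finset.mem_image.mp h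
      have hadj : (KB n).Adj (Sum.inl i) (Sum.inr j) := by simp
      refine ⟨Sum.inl i, Sum.inr j, SimpleGraph.Walk.cons hadj SimpleGraph.Walk.nil,
        ⟨?_, ?_, ?_⟩, ?_⟩
      · simp
      · simp [dist_lr]
      · simp
      · simp
    · obtain ⟨⟨k, i, j⟩, hm, rfl⟩ := Finset.mem_image.mp h
      simp only [Finset.mem_filter, Finset.mem_univ, true_and] at hm
      have h1 : (KB n).Adj (Sum.inl i) (Sum.inr k) := by simp
      have h2 : (KB n).Adj (Sum.inr k) (Sum.inl j) := by simp
      refine ⟨Sum.inl i, Sum.inl j,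
        SimpleGraph.Walk.cons h1 (SimpleGraph.Walk.cons h2 SimpleGraph.Walk.nil),
        ⟨?_, ?_, ?_⟩, ?_⟩
      · simp [hm.ne]
      · simp [dist_ll hn hm.ne]
      · simp
      · simp [Sym2.eq_swap]
    · obtain ⟨⟨k, i, j⟩, hm, rfl⟩ := Finset.mem_image.mp h
      simp only [Finset.mem_filter, Finset.mem_univ, true_and] at hm
      have h1 : (KB n).Adj (Sum.inr i) (Sum.inl k) := by simp
      have h2 : (KB n).Adj (Sum.inl k) (Sum.inr j) := by simp
      refine ⟨Sum.inr i, Sum.inr j,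
        SimpleGraph.Walk.cons h1 (SimpleGraph.Walk.cons h2 SimpleGraph.Walk.nil),
        ⟨?_, ?_, ?_⟩, ?_⟩
      · simp [hm.ne]
      · simp [dist_rr hn hm.ne]
      · simp
      · simp [Sym2.eq_swap]

private lemma F1_card : (F1 n).card = n ^ 2 := by
  rw [F1, Finset.card_image_of_injective, Finset.card_univ, Fintype.card_prod,
    Fintype.card_fin, sq]
  intro p q h
  rw [Finset.singleton_inj] at h
  obtain ⟨h1, h2⟩ : ((Sum.inl p.1 : Fin n ⊕ Fin n) = Sum.inl q.1 ∧
      (Sum.inr p.2 : Fin n ⊕ Fin n) = Sum.inr q.2) := by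
    simpa using h
  exact Prod.ext (by simpa using h1) (by simpa using h2)

private lemma F2L_card :
    (F2L n).card
      = ((univ : Finset (Fin n × Fin n × Fin n)).filter fun p => p.2.1 < p.2.2).card := by
  apply Finset.card_image_of_injOn
  rintro ⟨k, i, j⟩ hp ⟨k', i', j'⟩ hq he
  simp only [Finset.coe_filter, Set.mem_setOf_eq, Finset.mem_univ, true_and] at hp hq
  rw [fpair_eq] at he
  rcases he with ⟨h1, h2⟩ | ⟨h1, h2⟩
  · obtain ⟨hi, hk⟩ : i = i' ∧ k = k' := by simpa using h1
    obtain ⟨hj, -⟩ : j = j' ∧ k = k' := by simpa using h2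
    simp [hi, hj, hk]
  · obtain ⟨hi, hk⟩ : i = j' ∧ k = k' := by simpa using h1
    obtain ⟨hj, -⟩ : j = i' ∧ k = k' := by simpa using h2
    subst hi; subst hj
    exact absurd (hp.trans hq) (lt_irrefl _)

private lemma F2R_card :
    (F2R n).card
      = ((univ : Finset (Fin n × Fin n × Fin n)).filter fun p => p.2.1 < p.2.2).card := by
  apply Finset.card_image_of_injOn
  rintro ⟨k, i, j⟩ hp ⟨k', i', j'⟩ hq he
  simp only [Finset.coe_filter, Set.mem_setOf_eq, Finset.mem_univ, true_and] at hp hq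
  rw [fpair_eq] at he
  rcases he with ⟨h1, h2⟩ | ⟨h1, h2⟩
  · obtain ⟨hk, hi⟩ : k = k' ∧ i = i' := by simpa using h1
    obtain ⟨-, hj⟩ : k = k' ∧ j = j' := by simpa using h2
    simp [hi, hj, hk]
  · obtain ⟨hk, hi⟩ : k = k' ∧ i = j' := by simpa using h1
    obtain ⟨-, hj⟩ : k = k' ∧ j = i' := by simpa using h2
    subst hi; subst hj
    exact absurd (hp.trans hq) (lt_irrefl _)

private lemma filter_card :
    ((univ : Finset (Fin n × Fin n × Fin n)).filter fun p => p.2.1 < p.2.2).card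
      = n * ((univ : Finset (Fin n × Fin n)).filter fun q => q.1 < q.2).card := by
  have : ((univ : Finset (Fin n × Fin n × Fin n)).filter fun p => p.2.1 < p.2.2)
      = (univ : Finset (Fin n)) ×ˢ ((univ : Finset (Fin n × Fin n)).filter fun q => q.1 < q.2) := by
    ext ⟨k, i, j⟩
    simp [Finset.mem_product]
  rw [this, Finset.card_product, Finset.card_univ, Fintype.card_fin]

private lemma two_c (hn : 0 < n) :
    ((univ : Finset (Fin n × Fin n)).filter fun q => q.1 < q.2).card
      + ((univ : Finset (Fin n × Fin n)).filter fun q => q.1 < q.2).card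
      + n = n * n := by
  set P := (univ : Finset (Fin n × Fin n)).filter fun q => q.1 < q.2 with hP
  set Q := (univ : Finset (Fin n × Fin n)).filter fun q => q.2 < q.1 with hQ
  set D := (univ : Finset (Fin n × Fin n)).filter fun q => q.1 = q.2 with hD
  have hQc : Q.card = P.card := by
    apply Finset.card_bij (fun a _ => a.swap)
    · rintro ⟨a, b⟩ ha
      simp only [hP, hQ, Finset.mem_filter, Finset.mem_univ, true_and] at ha ⊢
      exact ha
    · rintro ⟨a, b⟩ ha ⟨c, d⟩ hc h; simpa [Prod.ext_iff, and_comm] using h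
    · rintro ⟨a, b⟩ hb
      refine ⟨(b, a), ?_, rfl⟩
      simp only [hP, hQ, Finset.mem_filter, Finset.mem_univ, true_and] at hb ⊢
      exact hb
  have hDc : D.card = n := by
    have : D = (univ : Finset (Fin n)).image fun i => (i, i) := by
      ext ⟨a, b⟩; constructor
      · intro h; simp only [hD, Finset.mem_filter] at h
        exact Finset.mem_image.mpr ⟨a, Finset.mem_univ _, by simp [h.2]⟩
      · intro h; obtain ⟨i, -, hi⟩ := Finset.mem_image.mp h
        simp [hD, ← hi]
    rw [this, Finset.card_image_of_injective, Finset.card_univ, Fintype.card_fin]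
    intro a b h; simpa [Prod.ext_iff] using h
  have hsplit : P.card + (Q ∪ D).card = n * n := by
    have h1 : (univ : Finset (Fin n × Fin n)).filter (fun q => ¬ q.1 < q.2) = Q ∪ D := by
      ext ⟨a, b⟩
      simp only [Finset.mem_filter, Finset.mem_univ, true_and, Finset.mem_union, hQ, hD,
        not_lt]
      constructor
      · intro h; rcases lt_or_eq_of_le h with h' | h'
        · exact Or.inl (by simpa using h')
        · exact Or.inr (by simpa using h'.symm)
      · rintro (h | h)
        · simp_all; exact le_of_lt (by simpa using h)
        · simp_all
    have := Finset.card_filter_add_card_filter_not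
      (s := (univ : Finset (Fin n × Fin n))) (p := fun q => q.1 < q.2)
    rw [h1] at this
    simpa [Finset.card_univ, Fintype.card_prod, Fintype.card_fin] using this
  have hdisj : Disjoint Q D := by
    rw [Finset.disjoint_left]
    rintro ⟨a, b⟩ hq hd
    simp only [hQ, hD, Finset.mem_filter] at hq hd
    exact absurd hd.2 (ne_of_gt hq.2)
  rw [Finset.card_union_of_disjoint hdisj, hQc, hDc] at hsplit
  omega

private lemma card_mem_F1 {S : Finset (Sym2 (Fin n ⊕ Fin n))} (h : S ∈ F1 n) :
    S.card = 1 := by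
  obtain ⟨p, -, rfl⟩ := Finset.mem_image.mp h
  simp

private lemma card_mem_F2L {S : Finset (Sym2 (Fin n ⊕ Fin n))} (h : S ∈ F2L n) :
    S.card = 2 := by
  obtain ⟨⟨k, i, j⟩, hm, rfl⟩ := Finset.mem_image.mp h
  simp only [Finset.mem_filter, Finset.mem_univ, true_and] at hm
  refine Finset.card_pair ?_
  intro he
  obtain ⟨hi, -⟩ : i = j ∧ k = k := by simpa using he
  exact hm.ne hi

private lemma card_mem_F2R {S : Finset (Sym2 (Fin n ⊕ Fin n))} (h : S ∈ F2R n) :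
    S.card = 2 := by
  obtain ⟨⟨k, i, j⟩, hm, rfl⟩ := Finset.mem_image.mp h
  simp only [Finset.mem_filter, Finset.mem_univ, true_and] at hm
  refine Finset.card_pair ?_
  intro he
  obtain ⟨-, hi⟩ : k = k ∧ i = j := by simpa using he
  exact hm.ne hi

private lemma disj_F2 : Disjoint (F2L n) (F2R n) := by
  rw [Finset.disjoint_left]
  intro S hL hR
  obtain ⟨⟨k, i, j⟩, hm, rfl⟩ := Finset.mem_image.mp hL
  obtain ⟨⟨k', i', j'⟩, hm', he⟩ := Finset.mem_image.mp hR
  simp only [Finset.mem_filter, Finset.mem_univ, true_and] at hm hm'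
  rw [fpair_eq] at he
  rcases he with ⟨h1, h2⟩ | ⟨h1, h2⟩
  · obtain ⟨hk, hi⟩ : k' = i ∧ i' = k := by simpa [eq_comm] using h1
    obtain ⟨hk2, -⟩ : k' = j ∧ j' = k := by simpa [eq_comm] using h2
    exact hm.ne (hk.symm.trans hk2)
  · obtain ⟨hk, -⟩ : k' = j ∧ i' = k := by simpa using h1
    obtain ⟨hk2, -⟩ : k' = i ∧ j' = k := by simpa using h2
    exact hm.ne (hk2.symm.trans hk)

private lemma disj_F1 : Disjoint (F1 n) (F2L n ∪ F2R n) := by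
  rw [Finset.disjoint_left]
  intro S h1 h2
  have hc1 := card_mem_F1 h1
  rcases Finset.mem_union.mp h2 with h | h
  · have := card_mem_F2L h; omega
  · have := card_mem_F2R h; omega

private lemma F2_card (hn : 0 < n) : (F2L n ∪ F2R n).card = n ^ 3 - n ^ 2 := by
  rw [Finset.card_union_of_disjoint disj_F2, F2L_card, F2R_card, filter_card]
  set c := ((univ : Finset (Fin n × Fin n)).filter fun q => q.1 < q.2).card with hc
  have h2c := two_c (n := n) hn
  have key : n ^ 3 = (n * c + n * c) + n ^ 2 := by
    have : n * c + n * c + n ^ 2 = n * (c + c + n) := by ring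
    rw [this, h2c]; ring
  exact (Nat.sub_eq_of_eq_add key).symm


/-- For every positive integer `n`, the geodesic path number of the complete bipartite
graph with both parts of size `n` is `n^3`; moreover it has `n^2` geodesic paths of
length `1` (its edges) and `n^3 - n^2` geodesic paths of length `2`. -/
theorem statement_12 (n : ℕ) (hn : 0 < n) :
    (completeBipartiteGraph (Fin n) (Fin n)).tgp = n ^ 3 ∧
    {S ∈ (completeBipartiteGraph (Fin n) (Fin n)).geodesicPathSets | S.card = 1}.ncard
      = n ^ 2 ∧
    {S ∈ (completeBipartiteGraph (Fin n) (Fin n)).geodesicPathSets | S.card = 2}.ncard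
      = n ^ 3 - n ^ 2 := by
  have hgps := gps_eq (n := n) hn
  refine ⟨?_, ?_, ?_⟩
  · rw [SimpleGraph.tgp]
    show (KB n).geodesicPathSets.ncard = n ^ 3
    rw [hgps, Set.ncard_coe_finset, Finset.union_assoc,
      Finset.card_union_of_disjoint disj_F1, F1_card, F2_card hn]
    have h1 : n ^ 2 ≤ n ^ 3 := Nat.pow_le_pow_right hn (by omega)
    omega
  · have hset : {S ∈ (completeBipartiteGraph (Fin n) (Fin n)).geodesicPathSets |
        S.card = 1} = ↑(F1 n) := by
      ext S
      constructor
      · rintro ⟨hS, hc⟩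
        rw [hgps] at hS
        simp only [Finset.coe_union, Set.mem_union, Finset.mem_coe] at hS
        rcases hS with (h | h) | h
        · exact h
        · have := card_mem_F2L h; omega
        · have := card_mem_F2R h; omega
      · intro h
        refine ⟨?_, card_mem_F1 h⟩
        rw [hgps]
        simp only [Finset.coe_union, Set.mem_union, Finset.mem_coe]
        exact Or.inl (Or.inl h)
    rw [hset, Set.ncard_coe_finset, F1_card]
  · have hset : {S ∈ (completeBipartiteGraph (Fin n) (Fin n)).geodesicPathSets |
        S.card = 2} = ↑(F2L n ∪ F2R n) := by
      ext S
      constructor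
      · rintro ⟨hS, hc⟩
        rw [hgps] at hS
        simp only [Finset.coe_union, Set.mem_union, Finset.mem_coe] at hS
        rw [Finset.mem_coe, Finset.mem_union]
        rcases hS with (h | h) | h
        · have := card_mem_F1 h; omega
        · exact Or.inl h
        · exact Or.inr h
      · intro h
        rw [Finset.mem_coe, Finset.mem_union] at h
        refine ⟨?_, ?_⟩
        · rw [hgps]
          simp only [Finset.coe_union, Set.mem_union, Finset.mem_coe]
          tauto
        rcases h with h | h
        · exact card_mem_F2L h
        · exact card_mem_F2R h
    rw [hset, Set.ncard_coe_finset, F2_card hn]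
end

section
/- Let n be a positive integer. If 2n − 1 divides n³(n³ + 1)/2, then n = 1, n = 2, or n = 5. -/
open SimpleGraph Finset

/-!
Modulo `d = 2n - 1` we have `2n ≡ 1`, so
`64 · n³(n³ + 1) = (2n)³((2n)³ + 8) ≡ 1 · 9`. Hence `d` divides `9`, i.e. `2n - 1 ∈ {1, 3, 9}`.
-/

theorem Nat.two_mul_sub_one_dvd_nine {n : ℕ} (hn : 0 < n)
    (h : 2 * n - 1 ∣ n ^ 3 * (n ^ 3 + 1)) : 2 * n - 1 ∣ 9 := by
  have hmod : 2 * n ≡ 1 [MOD 2 * n - 1] := Nat.modEq_sub (by omega)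
  have hscaled : 2 * n - 1 ∣ (2 * n) ^ 3 * ((2 * n) ^ 3 + 8) := by
    rw [show (2 * n) ^ 3 * ((2 * n) ^ 3 + 8) = 64 * (n ^ 3 * (n ^ 3 + 1)) by ring]
    exact h.mul_left 64
  simpa using ((hmod.pow 3).mul ((hmod.pow 3).add_right 8)).dvd_iff dvd_rfl |>.mp hscaled

/-- If `n` is a positive integer and `2n - 1` divides `n^3(n^3+1)/2`, then `n = 1`,
`n = 2`, or `n = 5`. -/
theorem statement_14 (n : ℕ) (hn : 0 < n)
    (h : 2 * n - 1 ∣ n ^ 3 * (n ^ 3 + 1) / 2) :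
    n = 1 ∨ n = 2 ∨ n = 5 := by
  have hdvd : 2 * n - 1 ∣ n ^ 3 * (n ^ 3 + 1) :=
    h.trans (Nat.div_dvd_of_dvd (Nat.even_mul_succ_self _).two_dvd)
  have h9 := Nat.two_mul_sub_one_dvd_nine hn hdvd
  have hn5 : n ≤ 5 := by have := Nat.le_of_dvd (by norm_num) h9; omega
  interval_cases n <;> simp_all
end

section
/- For every positive integer n with n ∉ {1, 2, 5}, the complete bipartite graph K_{n,n} admits no geodesic Leech labeling; that is, K_{n,n} is not a geodesic Leech graph for n ≠ 1, 2, 5. -/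
open SimpleGraph Finset

/-!
Because `K_{n,n}` is triangle-free and has diameter two, its geodesic paths are exactly the
single edges and the cherries (pairs of distinct edges at a common vertex); there are
`n² + 2n·C(n,2) = n³` of them. Summing the weights of all geodesic paths counts each edge once
as a path by itself and `2(n - 1)` times inside cherries, so a geodesic Leech labeling with
total edge label `T` gives `1 + 2 + ⋯ + n³ = (2n - 1) T`, i.e. `2n - 1 ∣ n³(n³ + 1)`.
Since `2n ≡ 1 (mod 2n - 1)`, we have `64 n³(n³ + 1) ≡ 1 · 9`, so `2n - 1 ∣ 9` and `n ∈ {1, 2, 5}`.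
-/

theorem Finset.sum_powersetCard_two_sum {α M : Type*} [DecidableEq α] [AddCommMonoid M]
    (s : Finset α) (f : α → M) :
    ∑ t ∈ s.powersetCard 2, ∑ a ∈ t, f a = (#s - 1) • ∑ a ∈ s, f a := by
  induction s using Finset.induction_on with
  | empty => rw [powersetCard_eq_empty.2 (by simp)]; simp
  | insert a s ha ih =>
    have hdisj : Disjoint (s.powersetCard 2) ((s.powersetCard 1).image (insert a)) := by
      simp only [disjoint_left, mem_image, mem_powersetCard]
      rintro t ⟨hts, -⟩ ⟨u, -, rfl⟩
      exact ha (hts (mem_insert_self a u))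
    have hinj : Set.InjOn (insert a) (s.powersetCard 1 : Set (Finset α)) := by
      intro t ht u hu htu
      simp only [mem_coe, mem_powersetCard] at ht hu
      rw [← erase_insert (fun h => ha (ht.1 h)), htu, erase_insert (fun h => ha (hu.1 h))]
    rw [powersetCard_succ_insert ha, sum_union hdisj, sum_image hinj, ih, powersetCard_one,
      sum_map, card_insert_of_notMem ha, sum_insert ha]
    have hpair : ∀ x ∈ s, ∑ b ∈ insert a {x}, f b = f a + f x := fun x hx =>
      sum_pair fun h => ha (h ▸ hx)
    simp only [Function.Embedding.coeFn_mk, sum_congr rfl hpair, sum_add_distrib, sum_const]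
    rcases Nat.eq_zero_or_pos #s with h | h
    · simp [card_eq_zero.1 h]
    · obtain ⟨k, hk⟩ := Nat.exists_eq_add_of_lt h
      rw [hk]
      simp only [zero_add, Nat.add_sub_cancel, smul_add, succ_nsmul]
      abel

theorem Finset.two_mul_sum_Icc_one_id (t : ℕ) : 2 * ∑ i ∈ Icc 1 t, i = t * (t + 1) := by
  induction t with
  | zero => simp
  | succ t ih => rw [sum_Icc_succ_top (by omega), mul_add, ih]; ring

namespace SimpleGraph
variable {V : Type*} {G : SimpleGraph V}

theorem isGeodesicWalk_cons_nil {u v : V} (h : G.Adj u v) :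
    G.IsGeodesicWalk (Walk.cons h Walk.nil) :=
  ⟨by simp [h.ne], by simp [dist_eq_one_iff_adj.2 h], by simp⟩

theorem CliqueFree.dist_eq_two (hG : G.CliqueFree 3) {u w v : V} (huw : G.Adj u w)
    (hwv : G.Adj w v) (huv : u ≠ v) : G.dist u v = 2 := by
  classical
  rw [dist, ENat.toNat_eq_iff two_ne_zero, Nat.cast_ofNat, edist_eq_two_iff]
  exact ⟨huv, fun h => hG {u, w, v} (is3Clique_triple_iff.2 ⟨huw, h, hwv⟩), w, huw, hwv.symm⟩

theorem CliqueFree.isGeodesicWalk_cons_cons (hG : G.CliqueFree 3) {u w v : V}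
    (huw : G.Adj u w) (hwv : G.Adj w v) (huv : u ≠ v) :
    G.IsGeodesicWalk (Walk.cons huw (Walk.cons hwv Walk.nil)) :=
  ⟨by simp [huw.ne, hwv.ne, huv], by simp [hG.dist_eq_two huw hwv huv], by simp⟩

section Finite
variable [Fintype V] [DecidableEq V] [DecidableRel G.Adj]

variable (G) in
def cherries : Finset (Finset (Sym2 V)) :=
  univ.biUnion fun v => (G.incidenceFinset v).powersetCard 2

theorem mem_cherries {S : Finset (Sym2 V)} :
    S ∈ G.cherries ↔ ∃ v, S ⊆ G.incidenceFinset v ∧ #S = 2 := by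
  simp [cherries]

theorem geodesicPathSets_subset_of_dist_le_two (hdiam : ∀ u v, G.dist u v ≤ 2) :
    G.geodesicPathSets ⊆ ↑(G.edgeFinset.powersetCard 1 ∪ G.cherries) := by
  rintro _ ⟨u, v, p, ⟨hp, hlen, hpos⟩, rfl⟩
  rw [coe_union, Set.mem_union, mem_coe, mem_coe, mem_cherries, mem_powersetCard]
  match p, hp, hlen with
  | .nil, _, _ => simp at hpos
  | .cons h .nil, _, _ => left; simp [h]
  | .cons (v := w) h (.cons h' .nil), hp, _ =>
    have huv : u ≠ v := by simp_all
    have hS : (Walk.cons h (Walk.cons h' Walk.nil)).edges.toFinset = {s(u, w), s(w, v)} := by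
      simp
    rw [hS]
    refine Or.inr ⟨w, ?_, card_pair ?_⟩
    · simp [insert_subset_iff, mem_incidenceFinset, h, h', mk'_mem_incidenceSet_right_iff]
    · simp [huv, h.ne]
  | .cons _ (.cons _ (.cons _ _)), _, hlen =>
    have := hdiam u v
    simp only [Walk.length_cons] at hlen
    omega

theorem CliqueFree.subset_geodesicPathSets (hG : G.CliqueFree 3) :
    ↑(G.edgeFinset.powersetCard 1 ∪ G.cherries) ⊆ G.geodesicPathSets := by
  intro S hS
  rw [coe_union, Set.mem_union, mem_coe, mem_coe, mem_cherries, powersetCard_one] at hS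
  rcases hS with hS | ⟨w, hSw, hS2⟩
  · obtain ⟨e, he, rfl⟩ := mem_map.1 hS
    induction e using Sym2.ind with
    | h u v =>
      have huv : G.Adj u v := mem_edgeFinset.1 he
      refine ⟨u, v, Walk.cons huv Walk.nil, isGeodesicWalk_cons_nil huv, ?_⟩
      simp
  · obtain ⟨e₁, e₂, hne, rfl⟩ := card_eq_two.1 hS2
    rw [insert_subset_iff, singleton_subset_iff, mem_incidenceFinset, mem_incidenceFinset] at hSw
    obtain ⟨x, rfl⟩ := Sym2.mem_iff_exists.1 hSw.1.2
    obtain ⟨y, rfl⟩ := Sym2.mem_iff_exists.1 hSw.2.2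
    rw [mem_incidenceSet, mem_incidenceSet] at hSw
    have hxy : x ≠ y := by rintro rfl; exact hne rfl
    exact ⟨x, y, _, hG.isGeodesicWalk_cons_cons hSw.1.symm hSw.2 hxy, by simp [Sym2.eq_swap]⟩

theorem geodesicPathSets_eq_of_cliqueFree (hG : G.CliqueFree 3)
    (hdiam : ∀ u v, G.dist u v ≤ 2) :
    G.geodesicPathSets = ↑(G.edgeFinset.powersetCard 1 ∪ G.cherries) :=
  (geodesicPathSets_subset_of_dist_le_two hdiam).antisymm hG.subset_geodesicPathSets

theorem sum_sum_incidenceFinset {M : Type*} [AddCommMonoid M] (f : Sym2 V → M) :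
    ∑ v, ∑ e ∈ G.incidenceFinset v, f e = 2 • ∑ e ∈ G.edgeFinset, f e := by
  rw [sum_comm' (t' := G.edgeFinset) (s' := Sym2.toFinset), smul_sum]
  · refine sum_congr rfl fun e he => ?_
    rw [sum_const, Sym2.card_toFinset_of_not_isDiag _
      (G.not_isDiag_of_mem_edgeSet (mem_edgeFinset.1 he))]
  · intro v e
    simp [mem_incidenceFinset, incidenceSet, Sym2.mem_toFinset, and_comm]

theorem disjoint_powersetCard_one_cherries : Disjoint (G.edgeFinset.powersetCard 1) G.cherries := by
  rw [Finset.disjoint_left]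
  intro S hS₁ hS₂
  obtain ⟨-, hS₂⟩ := (mem_cherries.1 hS₂).choose_spec
  rw [(mem_powersetCard.1 hS₁).2] at hS₂
  exact absurd hS₂ (by norm_num)

theorem pairwiseDisjoint_powersetCard_two_incidenceFinset :
    ((univ : Finset V) : Set V).PairwiseDisjoint fun v => (G.incidenceFinset v).powersetCard 2 := by
  intro v _ w _ hvw
  rw [Function.onFun, Finset.disjoint_left]
  intro S hSv hSw
  rw [mem_powersetCard] at hSv hSw
  have hsub : S ⊆ {s(v, w)} := fun e he => mem_singleton.2 <|
    G.incidenceSet_inter_incidenceSet_subset hvw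
      ⟨(mem_incidenceFinset _ _ _).1 (hSv.1 he), (mem_incidenceFinset _ _ _).1 (hSw.1 he)⟩
  have := card_le_card hsub
  rw [hSv.2, card_singleton] at this
  exact absurd this (by norm_num)

theorem card_cherries : #G.cherries = ∑ v, (G.degree v).choose 2 := by
  rw [cherries, card_biUnion pairwiseDisjoint_powersetCard_two_incidenceFinset]
  simp [card_incidenceFinset_eq_degree]

theorem sum_cherries {M : Type*} [AddCommMonoid M] (f : Sym2 V → M) :
    ∑ S ∈ G.cherries, ∑ e ∈ S, f e = ∑ v, (G.degree v - 1) • ∑ e ∈ G.incidenceFinset v, f e := by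
  rw [cherries, sum_biUnion pairwiseDisjoint_powersetCard_two_incidenceFinset]
  simp [sum_powersetCard_two_sum, card_incidenceFinset_eq_degree]

theorem card_powersetCard_one_union_cherries :
    #(G.edgeFinset.powersetCard 1 ∪ G.cherries) = #G.edgeFinset + ∑ v, (G.degree v).choose 2 := by
  rw [card_union_of_disjoint disjoint_powersetCard_one_cherries, card_powersetCard,
    Nat.choose_one_right, card_cherries]

theorem sum_powersetCard_one_union_cherries {M : Type*} [AddCommMonoid M] (f : Sym2 V → M) :
    ∑ S ∈ G.edgeFinset.powersetCard 1 ∪ G.cherries, ∑ e ∈ S, f e =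
      ∑ e ∈ G.edgeFinset, f e + ∑ v, (G.degree v - 1) • ∑ e ∈ G.incidenceFinset v, f e := by
  rw [sum_union disjoint_powersetCard_one_cherries, powersetCard_one, sum_map, sum_cherries]
  simp

theorem IsRegularOfDegree.card_powersetCard_one_union_cherries {d : ℕ}
    (hG : G.IsRegularOfDegree d) :
    #(G.edgeFinset.powersetCard 1 ∪ G.cherries) = #G.edgeFinset * d := by
  have hE : Fintype.card V * d = 2 * #G.edgeFinset := by
    rw [← sum_degrees_eq_twice_card_edges]; simp [hG.degree_eq]
  have hd : 2 * d.choose 2 = d * (d - 1) := by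
    rw [Nat.choose_two_right, Nat.mul_div_cancel' (Nat.even_mul_pred_self d).two_dvd]
  rw [SimpleGraph.card_powersetCard_one_union_cherries]
  simp only [hG.degree_eq, sum_const, card_univ, smul_eq_mul]
  rcases d with _ | d
  · simp_all
  · rw [Nat.add_sub_cancel] at hd
    nlinarith [congrArg (· * d) hE]

theorem IsRegularOfDegree.sum_powersetCard_one_union_cherries {M : Type*} [AddCommMonoid M]
    {d : ℕ} (hG : G.IsRegularOfDegree d) (f : Sym2 V → M) :
    ∑ S ∈ G.edgeFinset.powersetCard 1 ∪ G.cherries, ∑ e ∈ S, f e =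
      ∑ e ∈ G.edgeFinset, f e + (d - 1) • 2 • ∑ e ∈ G.edgeFinset, f e := by
  simp only [SimpleGraph.sum_powersetCard_one_union_cherries, hG.degree_eq, ← smul_sum,
    sum_sum_incidenceFinset]

end Finite

theorem IsGeodesicLeechLabeling.two_mul_sum_eq [DecidableEq V] {f : Sym2 V → ℕ}
    {𝒢 : Finset (Finset (Sym2 V))} (hf : G.IsGeodesicLeechLabeling f)
    (h𝒢 : G.geodesicPathSets = 𝒢) :
    2 * ∑ S ∈ 𝒢, ∑ e ∈ S, f e = #𝒢 * (#𝒢 + 1) := by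
  obtain ⟨-, hbij⟩ := hf
  rw [tgp, h𝒢, Set.ncard_coe_finset] at hbij
  have hsum : ∑ S ∈ 𝒢, ∑ e ∈ S, f e = ∑ i ∈ Icc 1 #𝒢, i :=
    sum_nbij (fun S => ∑ e ∈ S, f e) (fun S hS => by simpa using hbij.mapsTo hS) hbij.injOn
      (by simpa using hbij.surjOn) (fun _ _ => rfl)
  rw [hsum, Finset.two_mul_sum_Icc_one_id]

section CompleteBipartite
variable {α β : Type*}

instance : DecidableRel (completeBipartiteGraph α β).Adj :=
  fun _ _ => inferInstanceAs (Decidable (_ ∨ _))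

theorem cliqueFree_three_completeBipartiteGraph : (completeBipartiteGraph α β).CliqueFree 3 :=
  (CompleteBipartiteGraph.bicoloring α β).colorable.cliqueFree (by simp)

theorem dist_completeBipartiteGraph_le_two [Nonempty α] [Nonempty β] (u v : α ⊕ β) :
    (completeBipartiteGraph α β).dist u v ≤ 2 := by
  obtain ⟨a⟩ := ‹Nonempty α›
  obtain ⟨b⟩ := ‹Nonempty β›
  have hadj : ∀ a b, (completeBipartiteGraph α β).Adj (.inl a) (.inr b) := by simp
  rcases u with a₁ | b₁ <;> rcases v with a₂ | b₂
  · exact dist_le (.cons (hadj a₁ b) (.cons (hadj a₂ b).symm .nil))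
  · exact (dist_eq_one_iff_adj.2 (hadj a₁ b₂)).trans_le one_le_two
  · exact (dist_eq_one_iff_adj.2 (hadj a₂ b₁).symm).trans_le one_le_two
  · exact dist_le (.cons (hadj a b₁).symm (.cons (hadj a b₂) .nil))

variable [Fintype α] [Fintype β]

theorem card_edgeFinset_completeBipartiteGraph :
    #(completeBipartiteGraph α β).edgeFinset = Fintype.card α * Fintype.card β := by
  have := encard_edgeSet_completeBipartiteGraph (W₁ := α) (W₂ := β)
  rw [← coe_edgeFinset, Set.encard_coe_eq_coe_finsetCard, ENat.card_eq_coe_fintype_card,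
    ENat.card_eq_coe_fintype_card] at this
  exact_mod_cast this

theorem degree_completeBipartiteGraph_inl (a : α) :
    (completeBipartiteGraph α β).degree (.inl a) = Fintype.card β := by
  rw [← card_neighborFinset_eq_degree]
  simp only [neighborFinset_eq_filter, completeBipartiteGraph_adj]
  rw [card_filter, Fintype.sum_sum_type]; simp

theorem degree_completeBipartiteGraph_inr (b : β) :
    (completeBipartiteGraph α β).degree (.inr b) = Fintype.card α := by
  rw [← card_neighborFinset_eq_degree]
  simp only [neighborFinset_eq_filter, completeBipartiteGraph_adj]
  rw [card_filter, Fintype.sum_sum_type]; simp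

theorem isRegularOfDegree_completeBipartiteGraph :
    (completeBipartiteGraph α α).IsRegularOfDegree (Fintype.card α) := by
  rintro (a | a)
  · exact degree_completeBipartiteGraph_inl a
  · exact degree_completeBipartiteGraph_inr a

end CompleteBipartite
end SimpleGraph

theorem Nat.eq_one_or_two_or_five_of_dvd {n : ℕ} (hn : 0 < n)
    (h : 2 * n - 1 ∣ n ^ 3 * (n ^ 3 + 1)) : n = 1 ∨ n = 2 ∨ n = 5 := by
  have h8 : 2 * n - 1 ∣ 8 * n ^ 3 - 1 := by
    simpa [mul_pow] using Nat.sub_dvd_pow_sub_pow (2 * n) 1 3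
  have hid : 64 * (n ^ 3 * (n ^ 3 + 1)) = (8 * n ^ 3 - 1) * (8 * n ^ 3 + 9) + 9 := by
    have : 1 ≤ 8 * n ^ 3 := by have := Nat.one_le_pow 3 n hn; omega
    zify [this]
    ring
  have h9 : 2 * n - 1 ∣ 9 := (Nat.dvd_add_right (h8.mul_right _)).1 (hid ▸ h.mul_left 64)
  have : n ≤ 5 := by have := Nat.le_of_dvd (by norm_num) h9; omega
  interval_cases n <;> omega

/-- For every positive integer `n` with `n ∉ {1, 2, 5}`, the complete bipartite graph
with both parts of size `n` admits no geodesic Leech labeling. -/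
theorem statement_15 (n : ℕ) (hn : 0 < n) (h1 : n ≠ 1) (h2 : n ≠ 2) (h5 : n ≠ 5) :
    ¬ ∃ f : Sym2 (Fin n ⊕ Fin n) → ℕ,
      (completeBipartiteGraph (Fin n) (Fin n)).IsGeodesicLeechLabeling f := by
  rintro ⟨f, hf⟩
  have : NeZero n := ⟨hn.ne'⟩
  have hreg := isRegularOfDegree_completeBipartiteGraph (α := Fin n)
  rw [Fintype.card_fin] at hreg
  have hleech := hf.two_mul_sum_eq <| geodesicPathSets_eq_of_cliqueFree
    cliqueFree_three_completeBipartiteGraph dist_completeBipartiteGraph_le_two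
  rw [hreg.card_powersetCard_one_union_cherries, hreg.sum_powersetCard_one_union_cherries,
    card_edgeFinset_completeBipartiteGraph, Fintype.card_fin] at hleech
  set T := ∑ e ∈ (completeBipartiteGraph (Fin n) (Fin n)).edgeFinset, f e
  have hdvd : 2 * n - 1 ∣ n ^ 3 * (n ^ 3 + 1) := by
    refine ⟨2 * T, ?_⟩
    obtain ⟨k, rfl⟩ : ∃ k, n = k + 1 := ⟨n - 1, by omega⟩
    simp only [smul_eq_mul, Nat.add_sub_cancel] at hleech
    rw [show 2 * (k + 1) - 1 = 2 * k + 1 by omega]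
    linarith
  rcases Nat.eq_one_or_two_or_five_of_dvd hn hdvd with h | h | h <;> contradiction
end

section
/- The complete bipartite graph K_{3,3} (the unique edge-transitive cubic graph on 6 vertices) admits no geodesic Leech labeling: K_{3,3} has t_gp(K_{3,3}) = 27 geodesic paths (9 edges and 18 geodesic paths of length 2), each edge lies in exactly 5 geodesic paths, and 5 does not divide 27·28/2 = 378, so no geodesic Leech labeling of K_{3,3} exists. -/
set_option maxRecDepth 100000
set_option maxHeartbeats 4000000

open SimpleGraph Finset

namespace K33Aux

abbrev V := Fin 3 ⊕ Fin 3
abbrev G : SimpleGraph V := completeBipartiteGraph (Fin 3) (Fin 3)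

instance : DecidableRel G.Adj :=
  fun a b => inferInstanceAs (Decidable (a.isLeft ∧ b.isRight ∨ a.isRight ∧ b.isLeft))

def L1 : Finset (Finset (Sym2 V)) :=
  ((Finset.univ : Finset (V × V)).filter fun t => G.Adj t.1 t.2).image
    fun t => {s(t.1, t.2)}

def L2 : Finset (Finset (Sym2 V)) :=
  ((Finset.univ : Finset (V × V × V)).filter fun t =>
      G.Adj t.1 t.2.2 ∧ G.Adj t.2.2 t.2.1 ∧ ¬ G.Adj t.1 t.2.1 ∧ t.1 ≠ t.2.1).image
    fun t => {s(t.1, t.2.2), s(t.2.2, t.2.1)}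

def L : Finset (Finset (Sym2 V)) := L1 ∪ L2

lemma mem_L {S : Finset (Sym2 V)} : S ∈ L ↔
    (∃ u v : V, G.Adj u v ∧ {s(u, v)} = S) ∨
    (∃ u v w : V, G.Adj u w ∧ G.Adj w v ∧ ¬ G.Adj u v ∧ u ≠ v ∧
      ({s(u, w), s(w, v)} : Finset (Sym2 V)) = S) := by
  simp only [L, L1, L2, Finset.mem_union, Finset.mem_image, Finset.mem_filter,
    Finset.mem_univ, true_and, Prod.exists]
  constructor
  · rintro (⟨u, v, h, hS⟩ | ⟨u, v, w, ⟨h1, h2, h3, h4⟩, hS⟩)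
    · exact Or.inl ⟨u, v, h, hS⟩
    · exact Or.inr ⟨u, v, w, h1, h2, h3, h4, hS⟩
  · rintro (⟨u, v, h, hS⟩ | ⟨u, v, w, h1, h2, h3, h4, hS⟩)
    · exact Or.inl ⟨u, v, h, hS⟩
    · exact Or.inr ⟨u, v, w, ⟨h1, h2, h3, h4⟩, hS⟩

lemma mid : ∀ u v : V, u ≠ v → ¬ G.Adj u v → ∃ w, G.Adj u w ∧ G.Adj w v := by decide

lemma dist_le_two (u v : V) : G.dist u v ≤ 2 := by
  by_cases h : u = v
  · subst h; simp [SimpleGraph.dist_self]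
  by_cases ha : G.Adj u v
  · exact le_trans (SimpleGraph.dist_le (Walk.cons ha Walk.nil)) (by simp)
  obtain ⟨w, h1, h2⟩ := mid u v h ha
  exact le_trans (SimpleGraph.dist_le (Walk.cons h1 (Walk.cons h2 Walk.nil))) (by simp)

lemma dist_eq_two {u v : V} (hne : u ≠ v) (hna : ¬ G.Adj u v) : G.dist u v = 2 := by
  obtain ⟨w, h1, h2⟩ := mid u v hne hna
  have hr : G.Reachable u v := ⟨Walk.cons h1 (Walk.cons h2 Walk.nil)⟩
  have h0 : G.dist u v ≠ 0 := fun h => hne (hr.dist_eq_zero_iff.mp h)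
  have h1' : G.dist u v ≠ 1 := fun h => hna (SimpleGraph.dist_eq_one_iff_adj.mp h)
  have := dist_le_two u v
  omega

lemma gps_eq : G.geodesicPathSets = ↑L := by
  ext S
  simp only [SimpleGraph.geodesicPathSets, Set.mem_setOf_eq, Finset.mem_coe, mem_L]
  constructor
  · rintro ⟨u, v, p, ⟨hp, hlen, hpos⟩, rfl⟩
    have hd := dist_le_two u v
    cases p with
    | nil => simp at hpos
    | cons h q =>
      rename_i w
      cases q with
      | nil =>
        left
        exact ⟨u, v, h, by simp⟩
      | cons h' q' =>
        rename_i x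
        cases q' with
        | nil =>
          right
          have hlen2 : G.dist u v = 2 := by simpa using hlen.symm
          have hne : u ≠ v := by
            rintro rfl
            rw [SimpleGraph.dist_self] at hlen2
            exact absurd hlen2 (by norm_num)
          have hna : ¬ G.Adj u v := by
            intro hadj
            rw [SimpleGraph.dist_eq_one_iff_adj.mpr hadj] at hlen2
            exact absurd hlen2 (by norm_num)
          refine ⟨u, v, w, h, h', hna, hne, ?_⟩
          simp [Finset.ext_iff]
        | cons h'' q'' =>
          exfalso
          rw [← hlen] at hd
          simp only [Walk.length_cons] at hd
          omega
  · rintro (⟨u, v, h, rfl⟩ | ⟨u, v, w, h1, h2, hna, hne, rfl⟩)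
    · refine ⟨u, v, Walk.cons h Walk.nil, ⟨?_, ?_, ?_⟩, ?_⟩
      · simp [Walk.isPath_def, h.ne]
      · simp [SimpleGraph.dist_eq_one_iff_adj.mpr h]
      · simp
      · simp
    · refine ⟨u, v, Walk.cons h1 (Walk.cons h2 Walk.nil), ⟨?_, ?_, ?_⟩, ?_⟩
      · simp [Walk.isPath_def, h1.ne, h2.ne, hne]
      · simp [dist_eq_two hne hna]
      · simp
      · simp [Finset.ext_iff]

lemma sep_coe (p : Finset (Sym2 V) → Prop) [DecidablePred p] :
    {S ∈ (↑L : Set (Finset (Sym2 V))) | p S} = ↑(L.filter p) := by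
  ext S; simp

lemma tgp_eq : G.tgp = 27 := by
  rw [SimpleGraph.tgp, gps_eq, Set.ncard_coe_finset]
  decide

lemma card1 : (L.filter fun S => S.card = 1).card = 9 := by decide
lemma card2 : (L.filter fun S => S.card = 2).card = 18 := by decide
lemma count5 : ∀ e ∈ G.edgeFinset, (L.filter fun S => e ∈ S).card = 5 := by decide

lemma subset_edges {S : Finset (Sym2 V)} (hS : S ∈ L) : S ⊆ G.edgeFinset := by
  have : S ∈ G.geodesicPathSets := by rw [gps_eq]; exact hS
  obtain ⟨u, v, p, _, rfl⟩ := this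
  intro e he
  rw [SimpleGraph.mem_edgeFinset]
  exact p.edges_subset_edgeSet (List.mem_toFinset.mp he)

lemma no_leech : ¬ ∃ f : Sym2 V → ℕ, G.IsGeodesicLeechLabeling f := by
  rintro ⟨f, _, hbij⟩
  rw [gps_eq, tgp_eq] at hbij
  have hsum : ∑ S ∈ L, ∑ e ∈ S, f e = 378 := by
    have h1 : ∑ S ∈ L, ∑ e ∈ S, f e = ∑ n ∈ Finset.Icc 1 27, n := by
      refine Finset.sum_bij (i := fun S _ => ∑ e ∈ S, f e) ?_ ?_ ?_ ?_
      · intro S hS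
        have := hbij.mapsTo (Finset.mem_coe.mpr hS)
        rw [Finset.mem_Icc]
        simpa [Set.mem_Icc] using this
      · intro a ha b hb hab
        exact hbij.injOn (Finset.mem_coe.mpr ha) (Finset.mem_coe.mpr hb) hab
      · intro n hn
        obtain ⟨S, hS, hw⟩ := hbij.surjOn (by simpa [Set.mem_Icc] using Finset.mem_Icc.mp hn)
        exact ⟨S, Finset.mem_coe.mp hS, hw⟩
      · intro S _; rfl
    rw [h1]; decide
  have h2 : ∑ S ∈ L, ∑ e ∈ S, f e = 5 * ∑ e ∈ G.edgeFinset, f e := by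
    calc ∑ S ∈ L, ∑ e ∈ S, f e
        = ∑ S ∈ L, ∑ e ∈ G.edgeFinset, if e ∈ S then f e else 0 := by
          refine Finset.sum_congr rfl fun S hS => ?_
          rw [Finset.sum_ite_mem, Finset.inter_eq_right.mpr (subset_edges hS)]
      _ = ∑ e ∈ G.edgeFinset, ∑ S ∈ L, if e ∈ S then f e else 0 := Finset.sum_comm
      _ = ∑ e ∈ G.edgeFinset, (L.filter fun S => e ∈ S).card * f e := by
          refine Finset.sum_congr rfl fun e _ => ?_
          rw [← Finset.sum_filter, Finset.sum_const, smul_eq_mul]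
      _ = ∑ e ∈ G.edgeFinset, 5 * f e := by
          refine Finset.sum_congr rfl fun e he => ?_
          rw [count5 e he]
      _ = 5 * ∑ e ∈ G.edgeFinset, f e := by rw [Finset.mul_sum]
  rw [h2] at hsum
  omega

end K33Aux

/-- The complete bipartite graph with both parts of size `3` has geodesic path number
`27` (with `9` geodesic paths of length one, its edges, and `18` of length two), each of
its edges lies in exactly `5` geodesic paths, `5` does not divide `27 * 28 / 2 = 378`,
and it admits no geodesic Leech labeling. -/
theorem statement_16 :
    (completeBipartiteGraph (Fin 3) (Fin 3)).tgp = 27 ∧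
    {S ∈ (completeBipartiteGraph (Fin 3) (Fin 3)).geodesicPathSets | S.card = 1}.ncard = 9 ∧
    {S ∈ (completeBipartiteGraph (Fin 3) (Fin 3)).geodesicPathSets | S.card = 2}.ncard = 18 ∧
    (∀ e ∈ (completeBipartiteGraph (Fin 3) (Fin 3)).edgeSet,
      {S ∈ (completeBipartiteGraph (Fin 3) (Fin 3)).geodesicPathSets | e ∈ S}.ncard = 5) ∧
    ¬ (5 ∣ 27 * 28 / 2) ∧
    ¬ ∃ f : Sym2 (Fin 3 ⊕ Fin 3) → ℕ,
      (completeBipartiteGraph (Fin 3) (Fin 3)).IsGeodesicLeechLabeling f := by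
  refine ⟨K33Aux.tgp_eq, ?_, ?_, ?_, by decide, K33Aux.no_leech⟩
  · rw [K33Aux.gps_eq, K33Aux.sep_coe, Set.ncard_coe_finset]
    exact K33Aux.card1
  · rw [K33Aux.gps_eq, K33Aux.sep_coe, Set.ncard_coe_finset]
    exact K33Aux.card2
  · intro e he
    rw [K33Aux.gps_eq, K33Aux.sep_coe, Set.ncard_coe_finset]
    exact K33Aux.count5 e (SimpleGraph.mem_edgeFinset.mpr he)
end

section
/- For every integer n ≥ 5, the geodesic path number of the wheel graph W_n on n vertices is (n − 1)(n + 2)/2; that is, t_gp(W_n) = (n − 1)(n + 2)/2. -/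
/-!
In a graph in which any two vertices are at distance at most 2, a geodesic path is either an
edge or a two-edge path `u - w - v` with `u ≠ v` non-adjacent. Counting the latter by their middle
vertex `w` gives `t_gp(G) = |E| + ∑_w (number of non-adjacent pairs in N(w))`. In the wheel with
rim `C_m`, the hub contributes the `m(m-3)/2` non-edges of the rim and each rim vertex `k` only the
pair `{k-1, k+1}`, so `t_gp = 2m + m(m-3)/2 + m = m(m+3)/2`.
-/

open SimpleGraph Finset

/-- The wheel graph on `m + 1` vertices: a cycle on `m` vertices (the vertices `some i`)
together with a universal hub vertex `none` adjacent to every cycle vertex. -/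
def wheelGraph (m : ℕ) : SimpleGraph (Option (Fin m)) :=
  SimpleGraph.fromRel (fun x y =>
    (x = none ∧ y ≠ none) ∨
    (∃ i j : Fin m, x = some i ∧ y = some j ∧ (SimpleGraph.cycleGraph m).Adj i j))

namespace SimpleGraph

variable {V : Type*} {G : SimpleGraph V}

lemma isGeodesicWalk_toWalk {u v : V} (h : G.Adj u v) : G.IsGeodesicWalk h.toWalk :=
  ⟨by simp [h.ne], by simp [dist_eq_one_iff_adj.mpr h], by simp⟩

lemma isGeodesicWalk_cons_cons_nil_iff {u w v : V} (h₁ : G.Adj u w) (h₂ : G.Adj w v) :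
    G.IsGeodesicWalk (.cons h₁ (.cons h₂ .nil)) ↔ u ≠ v ∧ ¬ G.Adj u v := by
  have hle : G.dist u v ≤ 2 := dist_le (.cons h₁ (.cons h₂ .nil))
  have hreach : G.Reachable u v := ⟨.cons h₁ (.cons h₂ .nil)⟩
  simp only [IsGeodesicWalk, Walk.isPath_def, Walk.support_cons, Walk.support_nil,
    List.nodup_cons, List.mem_cons, List.not_mem_nil, Walk.length_cons, Walk.length_nil]
  constructor
  · rintro ⟨⟨hnd, -⟩, hdist, -⟩
    refine ⟨fun huv => hnd (Or.inr (Or.inl huv)), fun hadj => ?_⟩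
    rw [dist_eq_one_iff_adj.mpr hadj] at hdist
    omega
  · rintro ⟨huv, hadj⟩
    have h0 : G.dist u v ≠ 0 := dist_ne_zero_iff_ne_and_reachable.mpr ⟨huv, hreach⟩
    have h1 : G.dist u v ≠ 1 := fun h => hadj (dist_eq_one_iff_adj.mp h)
    refine ⟨⟨?_, ?_, by simp⟩, by omega, by omega⟩
    · rintro (h | h | h)
      exacts [h₁.ne h, huv h, h]
    · rintro (h | h)
      exacts [h₂.ne h, h]

variable [DecidableEq V]

def spokes (w : V) : Sym2 V → Finset (Sym2 V) :=
  Sym2.lift ⟨fun u v => {s(w, u), s(w, v)}, fun _ _ => pair_comm _ _⟩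

@[simp] lemma spokes_mk (w u v : V) : spokes w s(u, v) = {s(w, u), s(w, v)} := rfl

section Finite

variable [Fintype V] [DecidableRel G.Adj]

variable (G) in
def neighborNonEdges (w : V) : Finset (Sym2 V) :=
  (G.neighborFinset w).sym2 ∩ Gᶜ.edgeFinset

lemma mk_mem_neighborNonEdges {w u v : V} :
    s(u, v) ∈ G.neighborNonEdges w ↔ G.Adj w u ∧ G.Adj w v ∧ u ≠ v ∧ ¬ G.Adj u v := by
  simp [neighborNonEdges, and_assoc]

lemma card_spokes {w : V} {e : Sym2 V} (he : e ∈ G.neighborNonEdges w) : #(spokes w e) = 2 := by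
  induction e with
  | _ u v =>
    obtain ⟨-, hwv, huv, -⟩ := mk_mem_neighborNonEdges.mp he
    rw [spokes_mk, card_pair]
    simp [huv, hwv.ne]

lemma spokes_injOn :
    Set.InjOn (fun p : Σ _ : V, Sym2 V => spokes p.1 p.2) ↑(univ.sigma G.neighborNonEdges) := by
  rintro ⟨w, e⟩ he ⟨w', e'⟩ he' h
  induction e with
  | _ u v =>
    induction e' with
    | _ u' v' =>
      simp only [coe_sigma, coe_univ, Set.mem_sigma_iff, Set.mem_univ, mem_coe,
        mk_mem_neighborNonEdges, true_and] at he he' h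
      -- `w` is recovered as the common endpoint of the two spokes, since `u ≠ v`
      rw [spokes_mk, spokes_mk, ← coe_inj, coe_pair, coe_pair, Set.pair_eq_pair_iff] at h
      grind [Sym2.eq_iff, Adj.ne]

theorem geodesicPathSets_eq_of_forall_dist_le_two (h : ∀ u v, G.dist u v ≤ 2) :
    G.geodesicPathSets = ↑(G.edgeFinset.image ({·}) ∪
      (univ.sigma G.neighborNonEdges).image fun p => spokes p.1 p.2) := by
  ext S
  simp only [coe_union, coe_image, Set.mem_union, Set.mem_image, mem_coe]
  constructor
  · rintro ⟨u, v, p, hp, rfl⟩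
    have hlen : p.length ≤ 2 := hp.2.1 ▸ h u v
    match p with
    | .nil => simp [IsGeodesicWalk] at hp
    | .cons hadj .nil => exact Or.inl ⟨s(u, v), by simpa using hadj, by simp⟩
    | .cons (v := w) h₁ (.cons h₂ .nil) =>
      obtain ⟨huv, hnadj⟩ := (isGeodesicWalk_cons_cons_nil_iff h₁ h₂).mp hp
      refine Or.inr ⟨⟨w, s(u, v)⟩, ?_, ?_⟩
      · simpa [mk_mem_neighborNonEdges] using ⟨h₁.symm, h₂, huv, hnadj⟩
      · simp [Sym2.eq_swap]
    | .cons _ (.cons _ (.cons _ _)) => simp at hlen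
  · rintro (⟨e, he, rfl⟩ | ⟨⟨w, e⟩, he, rfl⟩)
    · induction e with
      | _ u v =>
        have hadj : G.Adj u v := by simpa using he
        exact ⟨u, v, hadj.toWalk, isGeodesicWalk_toWalk hadj, by simp⟩
    · induction e with
      | _ u v =>
        obtain ⟨hwu, hwv, huv, hnadj⟩ := mk_mem_neighborNonEdges.mp (by simpa using he)
        refine ⟨u, v, .cons hwu.symm (.cons hwv .nil),
          (isGeodesicWalk_cons_cons_nil_iff _ _).mpr ⟨huv, hnadj⟩, ?_⟩
        simp [Sym2.eq_swap]

theorem tgp_eq_of_forall_dist_le_two (h : ∀ u v, G.dist u v ≤ 2) :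
    G.tgp = #G.edgeFinset + ∑ w, #(G.neighborNonEdges w) := by
  have hdisj : Disjoint (G.edgeFinset.image ({·}))
      ((univ.sigma G.neighborNonEdges).image fun p => spokes p.1 p.2) := by
    rw [Finset.disjoint_left]
    rintro _ hS hS'
    obtain ⟨e, -, rfl⟩ := mem_image.mp hS
    obtain ⟨⟨w, e'⟩, he', h⟩ := mem_image.mp hS'
    have := card_spokes (mem_sigma.mp he').2
    simp_all
  rw [tgp, geodesicPathSets_eq_of_forall_dist_le_two h, Set.ncard_coe_finset,
    card_union_of_disjoint hdisj, card_image_of_injective _ singleton_injective,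
    card_image_of_injOn spokes_injOn, card_sigma]

end Finite

end SimpleGraph

section Cycle

open Fin.CommRing

lemma Fin.ofNat_ne_zero_of_lt {n c : ℕ} [NeZero n] [c.AtLeastTwo] (hc : c < n) :
    (OfNat.ofNat c : Fin n) ≠ 0 := by
  rw [Ne, Fin.ext_iff, Fin.coe_ofNat_eq_mod, Fin.val_zero]
  exact (Nat.mod_eq_of_lt hc).trans_ne (NeZero.ne c)

variable {m : ℕ}

lemma Fin.sub_one_ne_add_one (k : Fin (m + 3)) : k - 1 ≠ k + 1 := fun h =>
  Fin.ofNat_ne_zero_of_lt (n := m + 3) (c := 2) (by omega) (by linear_combination -h)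

lemma SimpleGraph.cycleGraph_not_adj_sub_one_add_one (k : Fin (m + 4)) :
    ¬ (cycleGraph (m + 4)).Adj (k - 1) (k + 1) := by
  rw [cycleGraph_adj, show k - 1 - (k + 1) = -2 by ring, show k + 1 - (k - 1) = 2 by ring]
  rintro (h | h)
  · exact Fin.ofNat_ne_zero_of_lt (n := m + 4) (c := 3) (by omega) (by linear_combination -h)
  · exact one_ne_zero (by linear_combination h : (1 : Fin (m + 4)) = 0)

end Cycle

section Wheel

variable {m : ℕ}

instance : DecidableRel (wheelGraph m).Adj := fun _ _ =>
  decidable_of_iff _ (fromRel_adj _ _ _).symm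

@[simp] lemma wheelGraph_none_adj {x : Option (Fin m)} :
    (wheelGraph m).Adj none x ↔ x ≠ none := by
  simp [wheelGraph, fromRel_adj, eq_comm]

@[simp] lemma wheelGraph_adj_none {x : Option (Fin m)} :
    (wheelGraph m).Adj x none ↔ x ≠ none := by
  rw [adj_comm, wheelGraph_none_adj]

@[simp] lemma wheelGraph_adj_some_some {i j : Fin m} :
    (wheelGraph m).Adj (some i) (some j) ↔ (cycleGraph m).Adj i j := by
  simpa [wheelGraph, fromRel_adj, adj_comm] using Adj.ne

lemma wheelGraph_adj_some {k : Fin (m + 2)} {x : Option (Fin (m + 2))} :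
    (wheelGraph (m + 2)).Adj (some k) x ↔ x = none ∨ x = some (k - 1) ∨ x = some (k + 1) := by
  cases x with
  | none => simp
  | some j =>
    rw [wheelGraph_adj_some_some, ← mem_neighborSet, cycleGraph_neighborSet]
    simp

lemma wheelGraph_dist_le_two (u v : Option (Fin m)) : (wheelGraph m).dist u v ≤ 2 := by
  match u, v with
  | none, none => simp
  | none, some j =>
    exact (dist_le (by simp : (wheelGraph m).Adj none (some j)).toWalk).trans one_le_two
  | some i, none =>
    exact (dist_le (by simp : (wheelGraph m).Adj (some i) none).toWalk).trans one_le_two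
  | some i, some j =>
    exact dist_le (.cons (by simp : (wheelGraph m).Adj (some i) none)
      (.cons (by simp : (wheelGraph m).Adj none (some j)) .nil))

lemma wheelGraph_neighborFinset_some (k : Fin m) :
    (wheelGraph m).neighborFinset (some k) =
      insert none (((cycleGraph m).neighborFinset k).map .some) := by
  ext (_ | j) <;> simp

lemma wheelGraph_degree_none : (wheelGraph m).degree none = m := by
  rw [← card_neighborFinset_eq_degree, neighborFinset_eq_filter]
  simp [filter_ne']

lemma wheelGraph_degree_some (k : Fin (m + 3)) : (wheelGraph (m + 3)).degree (some k) = 3 := by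
  rw [← card_neighborFinset_eq_degree, wheelGraph_neighborFinset_some,
    card_insert_of_notMem (by simp), card_map, card_neighborFinset_eq_degree,
    cycleGraph_degree_three_le]

lemma card_edgeFinset_wheelGraph : #(wheelGraph (m + 3)).edgeFinset = 2 * (m + 3) := by
  have h := sum_degrees_eq_twice_card_edges (wheelGraph (m + 3))
  simp only [Fintype.sum_option, wheelGraph_degree_none, wheelGraph_degree_some, sum_const,
    card_univ, Fintype.card_fin, smul_eq_mul] at h
  omega

lemma two_mul_card_edgeFinset_compl_wheelGraph :
    2 * #(wheelGraph (m + 3))ᶜ.edgeFinset = (m + 3) * m := by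
  rw [← sum_degrees_eq_twice_card_edges]
  simp only [degree_compl, Fintype.sum_option, wheelGraph_degree_none, wheelGraph_degree_some,
    Fintype.card_option, Fintype.card_fin, sum_const, card_univ, smul_eq_mul]
  rw [show m + 3 + 1 - 1 - (m + 3) = 0 by omega, show m + 3 + 1 - 1 - 3 = m by omega, zero_add]

lemma wheelGraph_neighborNonEdges_none :
    (wheelGraph m).neighborNonEdges none = (wheelGraph m)ᶜ.edgeFinset := by
  ext e
  induction e with
  | _ u v => cases u <;> cases v <;> simp [mk_mem_neighborNonEdges]

lemma wheelGraph_neighborNonEdges_some (k : Fin (m + 4)) :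
    (wheelGraph (m + 4)).neighborNonEdges (some k) = {s(some (k - 1), some (k + 1))} := by
  have hne := Fin.sub_one_ne_add_one k
  have hnadj := cycleGraph_not_adj_sub_one_add_one k
  ext e
  induction e with
  | _ u v =>
    rw [mk_mem_neighborNonEdges, wheelGraph_adj_some (m := m + 2),
      wheelGraph_adj_some (m := m + 2), mem_singleton, Sym2.eq_iff]
    constructor
    · rintro ⟨hu | hu | hu, hv | hv | hv, huv, hadj⟩ <;> subst hu hv <;> simp_all
    · rintro (⟨rfl, rfl⟩ | ⟨rfl, rfl⟩) <;> simp_all [adj_comm, Ne.symm hne]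

theorem two_mul_tgp_wheelGraph : 2 * (wheelGraph (m + 4)).tgp = (m + 4) * (m + 7) := by
  rw [tgp_eq_of_forall_dist_le_two wheelGraph_dist_le_two, Fintype.sum_option,
    wheelGraph_neighborNonEdges_none]
  simp only [wheelGraph_neighborNonEdges_some, card_singleton, sum_const, card_univ,
    Fintype.card_fin, smul_eq_mul, mul_one]
  have hE : #(wheelGraph (m + 4)).edgeFinset = 2 * (m + 4) := card_edgeFinset_wheelGraph
  have hEc : 2 * #(wheelGraph (m + 4))ᶜ.edgeFinset = (m + 4) * (m + 1) :=
    two_mul_card_edgeFinset_compl_wheelGraph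
  linarith

end Wheel

/-- For every `n ≥ 5`, the geodesic path number of the wheel graph on `n` vertices
(a cycle on `n - 1` vertices together with a universal hub vertex) is `(n-1)(n+2)/2`. -/
theorem statement_18 (n : ℕ) (hn : 5 ≤ n) :
    (wheelGraph (n - 1)).tgp = (n - 1) * (n + 2) / 2 := by
  obtain ⟨m, rfl⟩ := Nat.exists_eq_add_of_le' hn
  rw [show m + 5 - 1 = m + 4 by omega, show m + 5 + 2 = m + 7 by omega,
    ← two_mul_tgp_wheelGraph, Nat.mul_div_cancel_left _ two_pos]
end

section
/- The wheel graphs W_5 and W_6 admit geodesic Leech labelings; that is, W_5 and W_6 are geodesic Leech graphs. -/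
open SimpleGraph Finset

set_option maxRecDepth 100000

instance wheelGraphAdjDecidable (m : ℕ) : DecidableRel (wheelGraph m).Adj := fun x y =>
  decidable_of_iff _ (SimpleGraph.fromRel_adj _ x y).symm

/-- Characterization of geodesic path sets in a graph of diameter at most two. -/
theorem geodesicPathSets_eq {V : Type*} [DecidableEq V] (G : SimpleGraph V)
    (H : ∀ u v : V, u ≠ v → G.Adj u v ∨ ∃ w, G.Adj u w ∧ G.Adj w v) :
    G.geodesicPathSets =
      {S | (∃ e ∈ G.edgeSet, S = {e}) ∨
        ∃ u w v : V, u ≠ v ∧ ¬G.Adj u v ∧ G.Adj u w ∧ G.Adj w v ∧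
          S = {s(u, w), s(w, v)}} := by
  ext S
  constructor
  · rintro ⟨u, v, p, ⟨hp, hlen, hpos⟩, rfl⟩
    have huv : u ≠ v := by
      rintro rfl
      rw [SimpleGraph.dist_self] at hlen
      omega
    have hd2 : G.dist u v ≤ 2 := by
      rcases H u v huv with h | ⟨w, h1, h2⟩
      · exact le_trans (G.dist_le (SimpleGraph.Walk.cons h SimpleGraph.Walk.nil)) (by simp)
      · exact le_trans
          (G.dist_le (SimpleGraph.Walk.cons h1 (SimpleGraph.Walk.cons h2 SimpleGraph.Walk.nil)))
          (by simp)
    have hl : p.length = 1 ∨ p.length = 2 := by omega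
    rcases hl with hl | hl
    · left
      obtain ⟨e, he⟩ := List.length_eq_one_iff.mp (by rw [SimpleGraph.Walk.length_edges]; exact hl)
      exact ⟨e, p.edges_subset_edgeSet (he ▸ List.mem_singleton_self e), by simp [he]⟩
    · right
      have hnadj : ¬G.Adj u v := by
        intro ha
        have := SimpleGraph.dist_eq_one_iff_adj.mpr ha
        omega
      cases p with
      | nil => simp at hpos
      | cons h q =>
        rename_i w
        cases q with
        | nil => simp at hl
        | cons h' r =>
          cases r with
          | nil =>
            exact ⟨u, w, v, huv, hnadj, h, h', by
              simp [SimpleGraph.Walk.edges_cons]⟩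
          | cons h'' r' => simp at hl
  · rintro (⟨e, he, rfl⟩ | ⟨u, w, v, huv, hnadj, h1, h2, rfl⟩)
    · induction e with
      | _ u v =>
        have h : G.Adj u v := G.mem_edgeSet.mp he
        refine ⟨u, v, SimpleGraph.Walk.cons h SimpleGraph.Walk.nil,
          ⟨?_, ?_, by simp⟩, by simp⟩
        · simp [SimpleGraph.Walk.isPath_def, h.ne]
        · simp [SimpleGraph.dist_eq_one_iff_adj.mpr h]
    · refine ⟨u, v, SimpleGraph.Walk.cons h1 (SimpleGraph.Walk.cons h2 SimpleGraph.Walk.nil),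
        ⟨?_, ?_, by simp⟩, by simp⟩
      · simp [SimpleGraph.Walk.isPath_def, h1.ne, h2.ne, huv]
      · have hr : G.Reachable u v :=
          ⟨SimpleGraph.Walk.cons h1 (SimpleGraph.Walk.cons h2 SimpleGraph.Walk.nil)⟩
        have hle : G.dist u v ≤ 2 := by
          simpa using
            G.dist_le (SimpleGraph.Walk.cons h1 (SimpleGraph.Walk.cons h2 SimpleGraph.Walk.nil))
        have h0 : G.dist u v ≠ 0 := by
          rw [Ne, SimpleGraph.dist_eq_zero_iff_eq_or_not_reachable]
          push_neg
          exact ⟨huv, hr⟩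
        have h1' : G.dist u v ≠ 1 := fun hh => hnadj (SimpleGraph.dist_eq_one_iff_adj.mp hh)
        simp only [SimpleGraph.Walk.length_cons, SimpleGraph.Walk.length_nil]
        omega

section W5

abbrev V4 := Option (Fin 4)

/-- The `14` geodesic path sets of `W₅ = wheelGraph 4`. -/
def F4 : Finset (Finset (Sym2 V4)) :=
  { {s(none, some 0)}, {s(none, some 1)}, {s(none, some 2)}, {s(none, some 3)},
    {s(some 0, some 1)}, {s(some 1, some 2)}, {s(some 2, some 3)}, {s(some 3, some 0)},
    {s(some 0, some 1), s(some 1, some 2)},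
    {s(some 1, some 2), s(some 2, some 3)},
    {s(some 2, some 3), s(some 3, some 0)},
    {s(some 3, some 0), s(some 0, some 1)},
    {s(some 0, none), s(none, some 2)},
    {s(some 1, none), s(none, some 3)} }

theorem gps4 : (wheelGraph 4).geodesicPathSets = ↑F4 := by
  rw [geodesicPathSets_eq _ (by decide)]
  ext S
  simp only [Set.mem_setOf_eq, Finset.coe_insert, Set.mem_insert_iff, Finset.coe_singleton,
    Set.mem_singleton_iff, Finset.mem_coe]
  constructor
  · rintro (⟨e, he, rfl⟩ | ⟨u, w, v, huv, hnadj, h1, h2, rfl⟩)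
    · revert he
      revert e
      decide
    · revert huv hnadj h1 h2
      revert u w v
      decide
  · intro hS
    simp only [F4, Finset.mem_insert, Finset.mem_singleton] at hS
    rcases hS with rfl | rfl | rfl | rfl | rfl | rfl | rfl | rfl | rfl | rfl | rfl | rfl | rfl | rfl
    · exact Or.inl ⟨s(none, some 0), by decide, by decide⟩
    · exact Or.inl ⟨s(none, some 1), by decide, by decide⟩
    · exact Or.inl ⟨s(none, some 2), by decide, by decide⟩
    · exact Or.inl ⟨s(none, some 3), by decide, by decide⟩
    · exact Or.inl ⟨s(some 0, some 1), by decide, by decide⟩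
    · exact Or.inl ⟨s(some 1, some 2), by decide, by decide⟩
    · exact Or.inl ⟨s(some 2, some 3), by decide, by decide⟩
    · exact Or.inl ⟨s(some 3, some 0), by decide, by decide⟩
    · exact Or.inr ⟨some 0, some 1, some 2, by decide, by decide, by decide, by decide, by decide⟩
    · exact Or.inr ⟨some 1, some 2, some 3, by decide, by decide, by decide, by decide, by decide⟩
    · exact Or.inr ⟨some 2, some 3, some 0, by decide, by decide, by decide, by decide, by decide⟩
    · exact Or.inr ⟨some 3, some 0, some 1, by decide, by decide, by decide, by decide, by decide⟩
    · exact Or.inr ⟨some 0, none, some 2, by decide, by decide, by decide, by decide, by decide⟩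
    · exact Or.inr ⟨some 1, none, some 3, by decide, by decide, by decide, by decide, by decide⟩

def g4 : V4 → V4 → ℕ := fun x y =>
  match x, y with
  | none, none => 0
  | none, some i => ![1, 2, 5, 7] i
  | some i, none => ![1, 2, 5, 7] i
  | some i, some j => ![![0, 3, 0, 10], ![3, 0, 8, 0], ![0, 8, 0, 4], ![10, 0, 4, 0]] i j

def f4 : Sym2 V4 → ℕ := Sym2.lift ⟨g4, by decide⟩

end W5

section W6

abbrev V5 := Option (Fin 5)

/-- The `20` geodesic path sets of `W₆ = wheelGraph 5`. -/
def F5 : Finset (Finset (Sym2 V5)) :=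
  { {s(none, some 0)}, {s(none, some 1)}, {s(none, some 2)}, {s(none, some 3)},
    {s(none, some 4)},
    {s(some 0, some 1)}, {s(some 1, some 2)}, {s(some 2, some 3)}, {s(some 3, some 4)},
    {s(some 4, some 0)},
    {s(some 0, some 1), s(some 1, some 2)},
    {s(some 1, some 2), s(some 2, some 3)},
    {s(some 2, some 3), s(some 3, some 4)},
    {s(some 3, some 4), s(some 4, some 0)},
    {s(some 4, some 0), s(some 0, some 1)},
    {s(some 0, none), s(none, some 2)},
    {s(some 1, none), s(none, some 3)},
    {s(some 2, none), s(none, some 4)},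
    {s(some 3, none), s(none, some 0)},
    {s(some 4, none), s(none, some 1)} }

theorem gps5 : (wheelGraph 5).geodesicPathSets = ↑F5 := by
  rw [geodesicPathSets_eq _ (by decide)]
  ext S
  simp only [Set.mem_setOf_eq, Finset.coe_insert, Set.mem_insert_iff, Finset.coe_singleton,
    Set.mem_singleton_iff, Finset.mem_coe]
  constructor
  · rintro (⟨e, he, rfl⟩ | ⟨u, w, v, huv, hnadj, h1, h2, rfl⟩)
    · revert he
      revert e
      decide
    · revert huv hnadj h1 h2
      revert u w v
      decide
  · intro hS
    simp only [F5, Finset.mem_insert, Finset.mem_singleton] at hS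
    rcases hS with rfl | rfl | rfl | rfl | rfl | rfl | rfl | rfl | rfl | rfl | rfl | rfl | rfl | rfl | rfl | rfl | rfl | rfl | rfl | rfl
    · exact Or.inl ⟨s(none, some 0), by decide, by decide⟩
    · exact Or.inl ⟨s(none, some 1), by decide, by decide⟩
    · exact Or.inl ⟨s(none, some 2), by decide, by decide⟩
    · exact Or.inl ⟨s(none, some 3), by decide, by decide⟩
    · exact Or.inl ⟨s(none, some 4), by decide, by decide⟩
    · exact Or.inl ⟨s(some 0, some 1), by decide, by decide⟩
    · exact Or.inl ⟨s(some 1, some 2), by decide, by decide⟩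
    · exact Or.inl ⟨s(some 2, some 3), by decide, by decide⟩
    · exact Or.inl ⟨s(some 3, some 4), by decide, by decide⟩
    · exact Or.inl ⟨s(some 4, some 0), by decide, by decide⟩
    · exact Or.inr ⟨some 0, some 1, some 2, by decide, by decide, by decide, by decide, by decide⟩
    · exact Or.inr ⟨some 1, some 2, some 3, by decide, by decide, by decide, by decide, by decide⟩
    · exact Or.inr ⟨some 2, some 3, some 4, by decide, by decide, by decide, by decide, by decide⟩
    · exact Or.inr ⟨some 3, some 4, some 0, by decide, by decide, by decide, by decide, by decide⟩
    · exact Or.inr ⟨some 4, some 0, some 1, by decide, by decide, by decide, by decide, by decide⟩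
    · exact Or.inr ⟨some 0, none, some 2, by decide, by decide, by decide, by decide, by decide⟩
    · exact Or.inr ⟨some 1, none, some 3, by decide, by decide, by decide, by decide, by decide⟩
    · exact Or.inr ⟨some 2, none, some 4, by decide, by decide, by decide, by decide, by decide⟩
    · exact Or.inr ⟨some 3, none, some 0, by decide, by decide, by decide, by decide, by decide⟩
    · exact Or.inr ⟨some 4, none, some 1, by decide, by decide, by decide, by decide, by decide⟩

def g5 : V5 → V5 → ℕ := fun x y =>
  match x, y with
  | none, none => 0
  | none, some i => ![1, 2, 3, 8, 13] i
  | some i, none => ![1, 2, 3, 8, 13] i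
  | some i, some j =>
      ![![0, 5, 0, 0, 14], ![5, 0, 7, 0, 0], ![0, 7, 0, 11, 0],
        ![0, 0, 11, 0, 6], ![14, 0, 0, 6, 0]] i j

def f5 : Sym2 V5 → ℕ := Sym2.lift ⟨g5, by decide⟩

end W6

theorem bijOn_of_image {α : Type*} [DecidableEq α] (f : α → ℕ) (F : Finset α) (a b : ℕ)
    (himg : F.image f = Finset.Icc a b) (hcard : (Finset.Icc a b).card = F.card) :
    Set.BijOn f ↑F (Set.Icc a b) := by
  refine ⟨fun S hS => ?_, Finset.injOn_of_card_image_eq (by rw [himg, hcard]), fun n hn => ?_⟩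
  · have := Finset.mem_image_of_mem f hS
    rw [himg, Finset.mem_Icc] at this
    exact Set.mem_Icc.mpr this
  · have hn' : n ∈ Finset.Icc a b := Finset.mem_Icc.mpr (Set.mem_Icc.mp hn)
    rw [← himg] at hn'
    obtain ⟨S, hS, hw⟩ := Finset.mem_image.mp hn'
    exact ⟨S, hS, hw⟩

/-- The wheel graphs on `5` and `6` vertices admit geodesic Leech labelings;
that is, they are geodesic Leech graphs. -/
theorem statement_19 :
    (∃ f : Sym2 (Option (Fin 4)) → ℕ, (wheelGraph 4).IsGeodesicLeechLabeling f) ∧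
    (∃ g : Sym2 (Option (Fin 5)) → ℕ, (wheelGraph 5).IsGeodesicLeechLabeling g) := by
  constructor
  · refine ⟨f4, fun e he => ?_, ?_⟩
    · revert he; revert e; decide
    · have htgp : (wheelGraph 4).tgp = 14 := by
        rw [SimpleGraph.tgp, gps4, Set.ncard_coe_finset]
        decide
      rw [gps4, htgp]
      exact bijOn_of_image _ _ 1 14 (by decide) (by decide)
  · refine ⟨f5, fun e he => ?_, ?_⟩
    · revert he; revert e; decide
    · have htgp : (wheelGraph 5).tgp = 20 := by
        rw [SimpleGraph.tgp, gps5, Set.ncard_coe_finset]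
        decide
      rw [gps5, htgp]
      exact bijOn_of_image _ _ 1 20 (by decide) (by decide)
end
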